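/- arXiv:0707.0016 — 2 statements merged into one kernel-verified Lean document; each statement's English description precedes it below -/
import Mathlib

section
/- Let T : [0,∞)^P → [0,∞)^P be defined componentwise by T_γ(μ) = R_γ φ_γ(μ) where φ_γ(μ) = 1 + Σ_{n≥1} Σ_{(γ₁,...,γₙ)∈Pⁿ} bₙ(γ;γ₁,...,γₙ) μ_{γ₁}···μ_{γₙ} with nonnegative coefficients bₙ. Suppose μ : P → [0,∞) is a fixed point of T, i.e. μ_γ = R_γ φ_γ(μ) for all γ. If 0 ≤ ρ̃_γ ≤ R_γ for all γ, then the tree-sum Φ_{γ₀}(ρ̃) = Σ_{t ∈ planar rooted trees} ∏_{v ⪰ root} [ Σ_{(γ_{v¹},...,γ_{v^{s_v}})∈P^{s_v}} b_{s_v}(γ_v; γ_{v¹},...,γ_{v^{s_v}}) ρ̃_{γ_{v¹}}···ρ̃_{γ_{v^{s_v}}} ] converges and satisfies ρ̃_{γ₀} Φ_{γ₀}(ρ̃) ≤ μ_{γ₀} for every γ₀ ∈ P. -/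
open scoped BigOperators ENNReal NNReal
noncomputable section

/-- Planar rooted trees: a root together with an ordered (finite) list of subtrees. -/
inductive PTree where
  | node : List PTree → PTree

/-- The weight of a planar rooted tree pinned at polymer `γ`: at each vertex `v` with
`s_v` children a vertex function `b_{s_v}(γ_v; γ_{v¹},…,γ_{v^{s_v}})` acts, and the
polymers at the children are weighted by `ρ̃` and summed over `P`. -/
def treeW {P : Type*} (b : (n : ℕ) → P → (Fin n → P) → ℝ≥0∞) (ρ : P → ℝ≥0∞) :
    PTree → P → ℝ≥0∞
  | .node l, γ => ∑' g : Fin l.length → P,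
      b l.length γ g * ∏ i : Fin l.length, ρ (g i) * treeW b ρ (l.get i) (g i)
decreasing_by simp_wf; have := List.sizeOf_lt_of_mem (l.getElem_mem i.isLt); simp [PTree.node.sizeOf_spec]; omega

/-!
Cut the trees off at depth `k`: the truncated tree sum `Φₖ(γ)` obeys
`Φₖ₊₁(γ) = Σₙ Σ_g bₙ(γ; g) ∏ᵢ ρ̃(gᵢ) Φₖ(gᵢ)`, i.e. `ρ̃ Φₖ₊₁ = ρ̃ φ(ρ̃ Φₖ)`, which is the
expansion of the iterates of `T` into trees. Since `ρ̃ ≤ R` and `φ` is monotone, induction on `k`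
gives `ρ̃ Φₖ ≤ T(μ) = μ`. Every finite partial sum of the full tree series is dominated by some
`Φₖ`, so the bound passes to `Φ`.
-/

/-- Trees of height at least `k` get weight `0`. -/
def treeWTrunc {P : Type*} (b : (n : ℕ) → P → (Fin n → P) → ℝ≥0∞) (ρ : P → ℝ≥0∞) :
    ℕ → PTree → P → ℝ≥0∞
  | 0, _, _ => 0
  | k + 1, .node l, γ => ∑' g : Fin l.length → P,
      b l.length γ g * ∏ i : Fin l.length, ρ (g i) * treeWTrunc b ρ k (l.get i) (g i)

def PTree.equivList : PTree ≃ List PTree where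
  toFun | .node l => l
  invFun := .node
  left_inv | .node _ => rfl
  right_inv _ := rfl

theorem ENNReal.tsum_fin_pi_prod {α : Type*} :
    ∀ (n : ℕ) (h : Fin n → α → ℝ≥0∞), ∑' f : Fin n → α, ∏ i, h i (f i) = ∏ i, ∑' a, h i a
  | 0, h => by simp
  | n + 1, h => by
    rw [← (Fin.consEquiv fun _ : Fin (n + 1) => α).tsum_eq, ENNReal.tsum_prod', Fin.prod_univ_succ,
      ← tsum_fin_pi_prod n]
    simp only [Fin.consEquiv_apply, Fin.prod_univ_succ, Fin.cons_zero, Fin.cons_succ,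
      ENNReal.tsum_mul_left, ENNReal.tsum_mul_right]

section Truncation

variable {P : Type*} (b : (n : ℕ) → P → (Fin n → P) → ℝ≥0∞) (ρ : P → ℝ≥0∞)

theorem treeW_le_treeWTrunc (k : ℕ) :
    ∀ t γ, sizeOf t ≤ k → treeW b ρ t γ ≤ treeWTrunc b ρ k t γ := by
  induction k with
  | zero =>
    rintro ⟨l⟩ γ h
    simp [PTree.node.sizeOf_spec] at h
  | succ k ih =>
    rintro ⟨l⟩ γ h
    rw [treeW, treeWTrunc]
    gcongr with g i
    refine ih _ _ ?_
    have := List.sizeOf_lt_of_mem (l.getElem_mem i.isLt)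
    simp only [PTree.node.sizeOf_spec] at h
    simp only [List.get_eq_getElem]
    omega

theorem tsum_treeWTrunc_succ (k : ℕ) (γ : P) :
    ∑' t, treeWTrunc b ρ (k + 1) t γ =
      ∑' (n : ℕ) (g : Fin n → P), b n γ g * ∏ i, ρ (g i) * ∑' t, treeWTrunc b ρ k t (g i) := by
  let e : PTree ≃ Σ n, Fin n → PTree := PTree.equivList.trans List.equivSigmaTuple
  let F : (Σ n, Fin n → PTree) → ℝ≥0∞ := fun p =>
    ∑' g : Fin p.1 → P, b p.1 γ g * ∏ i, ρ (g i) * treeWTrunc b ρ k (p.2 i) (g i)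
  have hnode : ∀ t, treeWTrunc b ρ (k + 1) t γ = F (e t) := fun ⟨_⟩ => rfl
  calc ∑' t, treeWTrunc b ρ (k + 1) t γ
      = ∑' (n : ℕ) (f : Fin n → PTree) (g : Fin n → P),
          b n γ g * ∏ i, ρ (g i) * treeWTrunc b ρ k (f i) (g i) := by
        rw [tsum_congr hnode, e.tsum_eq F, ENNReal.tsum_sigma']
    _ = _ := by
        refine tsum_congr fun n => ?_
        rw [ENNReal.tsum_comm]
        refine tsum_congr fun g => ?_
        rw [ENNReal.tsum_mul_left,
          ENNReal.tsum_fin_pi_prod n fun i t => ρ (g i) * treeWTrunc b ρ k t (g i)]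
        simp only [ENNReal.tsum_mul_left]

variable {b ρ} {R μ : P → ℝ≥0∞}
  (hμ : ∀ γ, R γ * ∑' (n : ℕ) (g : Fin n → P), b n γ g * ∏ i, μ (g i) ≤ μ γ)
  (hρ : ∀ γ, ρ γ ≤ R γ)
include hμ hρ

theorem mul_tsum_treeWTrunc_le (k : ℕ) (γ : P) : ρ γ * ∑' t, treeWTrunc b ρ k t γ ≤ μ γ := by
  induction k generalizing γ with
  | zero => simp [treeWTrunc]
  | succ k ih =>
    rw [tsum_treeWTrunc_succ]
    refine le_trans ?_ (hμ γ)
    gcongr with n g i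
    exacts [hρ γ, ih (g i)]

theorem mul_tsum_treeW_le (γ : P) : ρ γ * ∑' t, treeW b ρ t γ ≤ μ γ := by
  rw [ENNReal.tsum_eq_iSup_sum, ENNReal.mul_iSup]
  refine iSup_le fun F => le_trans ?_ (mul_tsum_treeWTrunc_le hμ hρ (F.sup sizeOf) γ)
  gcongr
  calc ∑ t ∈ F, treeW b ρ t γ ≤ ∑ t ∈ F, treeWTrunc b ρ (F.sup sizeOf) t γ :=
        Finset.sum_le_sum fun t ht => treeW_le_treeWTrunc b ρ _ t γ (Finset.le_sup ht)
    _ ≤ ∑' t, treeWTrunc b ρ (F.sup sizeOf) t γ := ENNReal.sum_le_tsum F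

end Truncation

theorem stmt2_general {P : Type*}
    (b : (n : ℕ) → P → (Fin n → P) → ℝ≥0)
    (R μ ρ : P → ℝ≥0)
    (hfix : ∀ γ : P, (μ γ : ℝ≥0∞) =
      (R γ : ℝ≥0∞) * ∑' n : ℕ, ∑' g : Fin n → P,
        (b n γ g : ℝ≥0∞) * ∏ i, (μ (g i) : ℝ≥0∞))
    (hρ : ∀ γ, ρ γ ≤ R γ) (γ₀ : P) :
    (ρ γ₀ : ℝ≥0∞) *
        ∑' t : PTree, treeW (fun n γ g => (b n γ g : ℝ≥0∞)) (fun γ => (ρ γ : ℝ≥0∞)) t γ₀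
      ≤ (μ γ₀ : ℝ≥0∞) :=
  mul_tsum_treeW_le (fun γ => (hfix γ).ge) (fun γ => ENNReal.coe_le_coe.2 (hρ γ)) γ₀

/-- if `μ` is a fixed point of the map `T_γ(μ) = R_γ φ_γ(μ)`, where
`φ_γ(μ) = Σ_{n≥0} Σ_{(γ₁,…,γₙ)} bₙ(γ;γ₁,…,γₙ) μ_{γ₁}⋯μ_{γₙ}` (with `b₀ ≡ 1`), and
`0 ≤ ρ̃_γ ≤ R_γ` for all `γ`, then the sum over all planar rooted trees of the
corresponding weights pinned at `γ₀` converges and `ρ̃_{γ₀} Φ_{γ₀}(ρ̃) ≤ μ_{γ₀}`. -/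
theorem stmt2 {P : Type*} [Countable P]
    (b : (n : ℕ) → P → (Fin n → P) → ℝ≥0) (hb0 : ∀ γ g, b 0 γ g = 1)
    (R μ ρ : P → ℝ≥0)
    (hfix : ∀ γ : P, (μ γ : ℝ≥0∞) =
      (R γ : ℝ≥0∞) * ∑' n : ℕ, ∑' g : Fin n → P,
        (b n γ g : ℝ≥0∞) * ∏ i, (μ (g i) : ℝ≥0∞))
    (hρ : ∀ γ, ρ γ ≤ R γ) (γ₀ : P) :
    (ρ γ₀ : ℝ≥0∞) *
        ∑' t : PTree, treeW (fun n γ g => (b n γ g : ℝ≥0∞)) (fun γ => (ρ γ : ℝ≥0∞)) t γ₀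
      ≤ (μ γ₀ : ℝ≥0∞) :=
  stmt2_general b R μ ρ hfix hρ γ₀
end
end

section
/- Under the stability condition with function B, the Ursell coefficient satisfies the tree-graph bound |φᵀ(γ₁,...,γₙ)| ≤ e^{Σ_{i=1}^n B(γᵢ)} Σ_{τ ∈ Tₙ} ∏_{{i,j}∈E_τ} F(γᵢ,γⱼ), where Tₙ is the set of trees on vertex set {1,...,n} and F(γ,γ') = |e^{-V(γ,γ')} - 1| if γ ≁ γ' and F(γ,γ') = |V(γ,γ')| otherwise. -/
open scoped BigOperators ENNReal
attribute [local instance] Classical.propDecidable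
noncomputable section

/-- The Mayer factor `e^{-v} - 1`, with `e^{-∞} := 0`. -/
def eweight (v : EReal) : ℝ :=
  if v = ⊤ then -1 else Real.exp (-v.toReal) - 1

/-- Connectedness of an edge set on `{1,…,n}`. -/
def connEdges {n : ℕ} (E : Finset (Fin n × Fin n)) : Prop :=
  ∀ A : Finset (Fin n), A.Nonempty → (Finset.univ \ A).Nonempty →
    ∃ p ∈ E, (p.1 ∈ A ∧ p.2 ∉ A) ∨ (p.2 ∈ A ∧ p.1 ∉ A)

/-- Edge sets of connected graphs on `{1,…,n}` (edges encoded as ordered pairs `i < j`). -/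
def graphFinset (n : ℕ) : Finset (Finset (Fin n × Fin n)) :=
  Finset.univ.filter fun E => (∀ p ∈ E, p.1 < p.2) ∧ connEdges E

/-- Edge sets of trees on `{1,…,n}`: connected graphs with `n - 1` edges. -/
def treeFinset (n : ℕ) : Finset (Finset (Fin n × Fin n)) :=
  (graphFinset n).filter fun E => E.card = n - 1

/-- Total pair interaction energy `Σ_{1 ≤ i < j ≤ n} V(γ_i, γ_j)`. -/
def pairEnergy {P : Type*} (V : P → P → EReal) (n : ℕ) (γ : Fin n → P) : EReal :=
  ∑ p ∈ Finset.univ.filter (fun p : Fin n × Fin n => p.1 < p.2), V (γ p.1) (γ p.2)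

/-- The Ursell coefficient `φᵀ(γ₁,…,γₙ)`. -/
def ursell {P : Type*} (V : P → P → EReal) (n : ℕ) (γ : Fin n → P) : ℝ :=
  ∑ E ∈ graphFinset n, ∏ p ∈ E, eweight (V (γ p.1) (γ p.2))

/-- `F(γ,γ') = |e^{-V(γ,γ')} - 1| = 1` if `γ ≁ γ'`, and `F(γ,γ') = |V(γ,γ')|` otherwise. -/
def Freal {P : Type*} (V : P → P → EReal) (γ γ' : P) : ℝ :=
  if V γ γ' = ⊤ then 1 else |(V γ γ').toReal|


/-!
If some pair `e = (a, b)` of `S` is a hard core, its Mayer factor is `-1`, so a connected graph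
containing `e` cancels against the same graph without `e` whenever the latter is connected too.
The surviving graphs become disconnected when `e` is deleted; splitting them along the component
of `a` gives `φ(S) = -∑_A φ(A) φ(S \ A)` over the sets `A ∋ a` with `b ∉ A`, while gluing two
trees along `e` gives `∑_A T(A) T(S \ A) ≤ T(S)`. By induction on `|S|` this reduces the bound
to the case without hard cores.

For a stable real interaction `v`, grow a cluster `C ∋ r` one vertex at a time. The sum over
graphs that are connected once `C` is contracted is, by the fundamental theorem of calculus in
a parameter `t` scaling the interactions across `∂C`, an integral over `t ∈ [0, 1]` of the same
sums for `C ∪ {b}`. The scaled interactions stay stable on every partition keeping `C` in one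
block, being convex combinations of `v` and of `v` with `C` split off, so the exponential
factors are controlled; integrating `t^k` yields the weight `1 / (k + 1)` that counts each
spanning tree exactly once.
-/

namespace TreeGraph

section Connectivity

variable {α : Type*} {S A : Finset α} {E : Finset (α × α)}

def Crosses (A : Finset α) (p : α × α) : Prop := ¬(p.1 ∈ A ↔ p.2 ∈ A)

def IsConnectedOn (S : Finset α) (E : Finset (α × α)) : Prop :=
  ∀ A ⊆ S, A.Nonempty → (S \ A).Nonempty → ∃ p ∈ E, Crosses A p

lemma IsConnectedOn.mono {E' : Finset (α × α)} (h : IsConnectedOn S E) (hE : E ⊆ E') :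
    IsConnectedOn S E' := fun A hA h₁ h₂ => by
  obtain ⟨p, hp, hpA⟩ := h A hA h₁ h₂
  exact ⟨p, hE hp, hpA⟩

lemma IsConnectedOn.eq_of_forall_not_crosses (hc : IsConnectedOn S E) (hAS : A ⊆ S)
    (hA : A.Nonempty) (h : ∀ p ∈ E, ¬Crosses A p) : A = S := by
  by_contra hne
  obtain ⟨p, hp, hpc⟩ := hc A hAS hA (Finset.sdiff_nonempty.2 fun h' => hne (hAS.antisymm h'))
  exact h p hp hpc

lemma IsConnectedOn.sdiff {b : α} (hc : IsConnectedOn S E) (hA : A ⊆ S) (hbA : b ∉ A)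
    (hb : ∀ p ∈ E, Crosses A p → p.1 = b ∨ p.2 = b) :
    IsConnectedOn (S \ A) (E.filter fun p => p.1 ∉ A) := by
  intro A' hA' ⟨x, hx⟩ ⟨y, hy⟩
  have hA'S : A' ⊆ S := fun z hz => (Finset.mem_sdiff.1 (hA' hz)).1
  have hdisj : ∀ z ∈ A', z ∉ A := fun z hz => (Finset.mem_sdiff.1 (hA' hz)).2
  obtain ⟨⟨hyS, hyA⟩, hyA'⟩ : (y ∈ S ∧ y ∉ A) ∧ y ∉ A' := by simpa using hy
  -- if `b ∈ A'`, enlarge the cut `A'` by `A` so that the edges at `b` do not cross it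
  let A'' := if b ∈ A' then A ∪ A' else A'
  have hA'' : ∀ z, z ∈ A'' ↔ z ∈ A' ∨ (b ∈ A' ∧ z ∈ A) := by
    intro z
    by_cases hbA' : b ∈ A' <;> simp [A'', hbA', or_comm]
  obtain ⟨p, hp, hpc⟩ := hc A''
    (fun z hz => by rcases (hA'' z).1 hz with h | h; exacts [hA'S h, hA h.2])
    ⟨x, (hA'' x).2 (Or.inl hx)⟩
    ⟨y, Finset.mem_sdiff.2 ⟨hyS, fun h => by rcases (hA'' y).1 h with h | h <;> tauto⟩⟩
  have hb' : Crosses A p →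
      (p.1 ∉ A ∧ (p.1 ∈ A' ↔ b ∈ A')) ∨ (p.2 ∉ A ∧ (p.2 ∈ A' ↔ b ∈ A')) := fun h => by
    rcases hb p hp h with h | h <;> simp [h, hbA]
  have h₁ := hdisj p.1
  have h₂ := hdisj p.2
  have hbA' := hdisj b
  simp only [Crosses, hA''] at hpc hb'
  have hout : p.1 ∉ A ∧ p.2 ∉ A := by grind
  refine ⟨p, Finset.mem_filter.2 ⟨hp, hout.1⟩, ?_⟩
  simp only [Crosses]
  grind

def Adj (E : Finset (α × α)) (x y : α) : Prop := (x, y) ∈ E ∨ (y, x) ∈ E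

lemma exists_crosses_of_reflTransGen {x y : α} (h : Relation.ReflTransGen (Adj E) x y)
    (hxy : ¬(x ∈ A ↔ y ∈ A)) : ∃ p ∈ E, Crosses A p := by
  induction h with
  | refl => exact absurd Iff.rfl hxy
  | @tail c d _ hcd ih =>
    by_cases hc : x ∈ A ↔ c ∈ A
    · rcases hcd with h | h
      · exact ⟨(c, d), h, fun h' => hxy (hc.trans h')⟩
      · exact ⟨(d, c), h, fun h' => hxy (hc.trans h'.symm)⟩
    · exact ih hc

lemma isConnectedOn_of_forall_reflTransGen {a : α}
    (h : ∀ x ∈ S, Relation.ReflTransGen (Adj E) a x) : IsConnectedOn S E := by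
  rintro A hA ⟨x, hx⟩ ⟨y, hy⟩
  rw [Finset.mem_sdiff] at hy
  by_cases haA : a ∈ A
  · exact exists_crosses_of_reflTransGen (h y hy.1) fun h => hy.2 (h.1 haA)
  · exact exists_crosses_of_reflTransGen (h x (hA hx)) fun h => haA (h.2 hx)

end Connectivity

section Pairs

variable {α : Type*} [LinearOrder α] {S A C : Finset α} {p : α × α}

def pairs (S : Finset α) : Finset (α × α) :=
  (S ×ˢ S).filter fun p => p.1 < p.2

@[simp] lemma mem_pairs : p ∈ pairs S ↔ p.1 ∈ S ∧ p.2 ∈ S ∧ p.1 < p.2 := by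
  simp [pairs, and_assoc]

lemma pairs_mono {T : Finset α} (h : S ⊆ T) : pairs S ⊆ pairs T := fun p hp => by
  rw [mem_pairs] at hp ⊢
  exact ⟨h hp.1, h hp.2.1, hp.2.2⟩

@[simp] lemma pairs_singleton (r : α) : pairs ({r} : Finset α) = ∅ := by
  ext p
  simp only [mem_pairs, Finset.mem_singleton, Finset.notMem_empty, iff_false]
  rintro ⟨h₁, h₂, h⟩
  exact h.ne (h₁.trans h₂.symm)

lemma not_crosses_of_mem_pairs (hp : p ∈ pairs A) : ¬Crosses A p := by
  rw [mem_pairs] at hp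
  simp [Crosses, hp.1, hp.2.1]

lemma not_crosses_of_mem_pairs_sdiff (hp : p ∈ pairs (S \ A)) : ¬Crosses A p := by
  rw [mem_pairs, Finset.mem_sdiff, Finset.mem_sdiff] at hp
  simp [Crosses, hp.1.2, hp.2.1.2]

lemma exists_mem_pairs_crosses {x y : α} (hx : x ∈ C) (hy : y ∈ C) (h : ¬(x ∈ A ↔ y ∈ A)) :
    ∃ p ∈ pairs C, Crosses A p := by
  rcases lt_trichotomy x y with hxy | rfl | hxy
  · exact ⟨(x, y), mem_pairs.2 ⟨hx, hy, hxy⟩, h⟩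
  · exact absurd Iff.rfl h
  · exact ⟨(y, x), mem_pairs.2 ⟨hy, hx, hxy⟩, fun h' => h h'.symm⟩

lemma isConnectedOn_pairs (S : Finset α) : IsConnectedOn S (pairs S) := by
  rintro A hA ⟨x, hx⟩ ⟨y, hy⟩
  rw [Finset.mem_sdiff] at hy
  exact exists_mem_pairs_crosses (hA hx) hy.1 fun h => hy.2 (h.1 hx)

lemma IsConnectedOn.exists_crosses {E : Finset (α × α)} (hc : IsConnectedOn S E)
    (hE : E ⊆ pairs S) {x y : α} (hx : x ∈ S) (hy : y ∈ S) (hxy : ¬(x ∈ A ↔ y ∈ A)) :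
    ∃ p ∈ E, Crosses A p := by
  obtain ⟨x, y, hx, hy, hxA, hyA⟩ : ∃ x y, x ∈ S ∧ y ∈ S ∧ x ∈ A ∧ y ∉ A := by
    by_cases hxA : x ∈ A
    · exact ⟨x, y, hx, hy, hxA, fun hyA => hxy (iff_of_true hxA hyA)⟩
    · exact ⟨y, x, hy, hx, by tauto, hxA⟩
  obtain ⟨p, hp, hpc⟩ := hc (S ∩ A) Finset.inter_subset_left
    ⟨x, Finset.mem_inter.2 ⟨hx, hxA⟩⟩ ⟨y, by simp [hy, hyA]⟩
  have := mem_pairs.1 (hE hp)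
  exact ⟨p, hp, by simpa [Crosses, this.1, this.2.1] using hpc⟩

lemma isConnectedOn_insert_union {E₁ E₂ : Finset (α × α)} {e : α × α} (he₁ : e.1 ∈ A)
    (he₂ : e.2 ∈ S \ A) (hE₁ : E₁ ⊆ pairs A) (hE₂ : E₂ ⊆ pairs (S \ A))
    (hc₁ : IsConnectedOn A E₁) (hc₂ : IsConnectedOn (S \ A) E₂) :
    IsConnectedOn S (insert e (E₁ ∪ E₂)) := by
  intro A' hA' ⟨x, hx⟩ ⟨y, hy⟩
  have hsub : E₁ ∪ E₂ ⊆ insert e (E₁ ∪ E₂) := Finset.subset_insert _ _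
  obtain h₁ | h₁ := em (∃ z ∈ A, ¬(e.1 ∈ A' ↔ z ∈ A'))
  · obtain ⟨z, hz, hzA'⟩ := h₁
    obtain ⟨p, hp, hpc⟩ := hc₁.exists_crosses hE₁ he₁ hz hzA'
    exact ⟨p, hsub (Finset.mem_union_left _ hp), hpc⟩
  obtain h₂ | h₂ := em (∃ z ∈ S \ A, ¬(e.2 ∈ A' ↔ z ∈ A'))
  · obtain ⟨z, hz, hzA'⟩ := h₂
    obtain ⟨p, hp, hpc⟩ := hc₂.exists_crosses hE₂ he₂ hz hzA'
    exact ⟨p, hsub (Finset.mem_union_right _ hp), hpc⟩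
  push Not at h₁ h₂
  have hside : ∀ z ∈ S, (z ∈ A' ↔ e.1 ∈ A') ∨ (z ∈ A' ↔ e.2 ∈ A') := fun z hz => by
    by_cases hzA : z ∈ A
    · exact Or.inl (h₁ z hzA).symm
    · exact Or.inr (h₂ z (Finset.mem_sdiff.2 ⟨hz, hzA⟩)).symm
  rw [Finset.mem_sdiff] at hy
  refine ⟨e, Finset.mem_insert_self _ _, fun he => ?_⟩
  rcases hside x (hA' hx) with h | h <;> rcases hside y hy.1 with h' | h' <;> tauto

end Pairs

section Component

variable {α : Type*} {S : Finset α} {E : Finset (α × α)} {a : α}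

def component (S : Finset α) (E : Finset (α × α)) (a : α) : Finset α :=
  S.filter (Relation.ReflTransGen (Adj E) a)

lemma mem_component_self (ha : a ∈ S) : a ∈ component S E a :=
  Finset.mem_filter.2 ⟨ha, .refl⟩

lemma component_subset : component S E a ⊆ S := Finset.filter_subset _ _

variable [LinearOrder α]

lemma not_crosses_component (hE : E ⊆ pairs S) {p : α × α} (hp : p ∈ E) :
    ¬Crosses (component S E a) p := by
  have hpS := mem_pairs.1 (hE hp)
  simp only [Crosses, component, Finset.mem_filter, hpS.1, hpS.2.1, true_and, not_not]
  exact ⟨fun h => h.tail (Or.inl hp), fun h => h.tail (Or.inr hp)⟩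

lemma component_eq_self (hE : E ⊆ pairs S) (hc : IsConnectedOn S E) (ha : a ∈ S) :
    component S E a = S :=
  hc.eq_of_forall_not_crosses component_subset ⟨a, mem_component_self ha⟩
    fun _ hp => not_crosses_component hE hp

lemma isConnectedOn_component (hE : E ⊆ pairs S) :
    IsConnectedOn (component S E a) (E.filter fun p => p.1 ∈ component S E a) := by
  refine isConnectedOn_of_forall_reflTransGen (a := a) fun x hx => ?_
  have hmem : ∀ z, Relation.ReflTransGen (Adj E) a z → z ∈ S → z ∈ component S E a :=
    fun z hz hzS => Finset.mem_filter.2 ⟨hzS, hz⟩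
  induction (Finset.mem_filter.1 hx).2 with
  | refl => exact .refl
  | @tail c d hac hcd ih =>
    rcases hcd with h | h <;> have hpS := mem_pairs.1 (hE h)
    · exact (ih (hmem c hac hpS.1)).tail (Or.inl (Finset.mem_filter.2 ⟨h, hmem c hac hpS.1⟩))
    · exact (ih (hmem c hac hpS.2.1)).tail
        (Or.inr (Finset.mem_filter.2 ⟨h, hmem d (hac.tail (Or.inr h)) hpS.1⟩))

lemma component_eq_of_forall_not_crosses {A : Finset α} {E₁ : Finset (α × α)} (hA : A ⊆ S)
    (ha : a ∈ A) (hE₁ : E₁ ⊆ pairs A) (hc₁ : IsConnectedOn A E₁) (hsub : E₁ ⊆ E)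
    (hE : ∀ p ∈ E, ¬Crosses A p) : component S E a = A := by
  refine Finset.Subset.antisymm (fun x hx => by_contra fun hxA => ?_) fun x hx => ?_
  · obtain ⟨p, hp, hpc⟩ := exists_crosses_of_reflTransGen (Finset.mem_filter.1 hx).2
      fun h => hxA (h.1 ha)
    exact hE p hp hpc
  · have hx' : x ∈ component A E₁ a := by rwa [component_eq_self hE₁ hc₁ ha]
    exact Finset.mem_filter.2 ⟨hA hx, Relation.ReflTransGen.mono
      (fun _ _ (h : Adj E₁ _ _) => h.imp (@hsub _) (@hsub _)) _ _ (Finset.mem_filter.1 hx').2⟩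

end Component

section Splittings

variable {α : Type*}

def separating (S : Finset α) (e : α × α) : Finset (Finset α) :=
  (S.erase e.2).powerset.filter (e.1 ∈ ·)

lemma mem_separating {S A : Finset α} {e : α × α} :
    A ∈ separating S e ↔ A ⊆ S ∧ e.1 ∈ A ∧ e.2 ∉ A := by
  simp only [separating, Finset.mem_filter, Finset.mem_powerset, Finset.subset_erase]
  tauto

def splittings (G : Finset α → Finset (Finset (α × α))) (S : Finset α) (e : α × α) :
    Finset (Σ _ : Finset α, Finset (α × α) × Finset (α × α)) :=
  (separating S e).sigma fun A => G A ×ˢ G (S \ A)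

lemma mem_splittings {G : Finset α → Finset (Finset (α × α))} {S A : Finset α} {e : α × α}
    {E₁ E₂ : Finset (α × α)} :
    ⟨A, E₁, E₂⟩ ∈ splittings G S e ↔ A ∈ separating S e ∧ E₁ ∈ G A ∧ E₂ ∈ G (S \ A) := by
  simp [splittings]

lemma sum_mul_sum_eq_sum_splittings (G : Finset α → Finset (Finset (α × α)))
    (w : α × α → ℝ) (S : Finset α) (e : α × α) :
    ∑ A ∈ separating S e, (∑ E ∈ G A, ∏ p ∈ E, w p) * (∑ E ∈ G (S \ A), ∏ p ∈ E, w p) =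
      ∑ x ∈ splittings G S e, (∏ p ∈ x.2.1, w p) * ∏ p ∈ x.2.2, w p := by
  rw [splittings, Finset.sum_sigma]
  exact Finset.sum_congr rfl fun A _ => by rw [Finset.sum_mul_sum, Finset.sum_product]

end Splittings

section HardCoreSplitting

variable {α : Type*} [LinearOrder α] {S A : Finset α} {e : α × α} {E E₁ E₂ : Finset (α × α)}

def connectedGraphs (S : Finset α) : Finset (Finset (α × α)) :=
  (pairs S).powerset.filter (IsConnectedOn S)

def spanningTrees (S : Finset α) : Finset (Finset (α × α)) :=
  (connectedGraphs S).filter fun E => E.card + 1 = S.card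

def graphSum (w : α × α → ℝ) (S : Finset α) : ℝ :=
  ∑ E ∈ connectedGraphs S, ∏ p ∈ E, w p

def treeSum (w : α × α → ℝ) (S : Finset α) : ℝ :=
  ∑ E ∈ spanningTrees S, ∏ p ∈ E, w p

lemma mem_connectedGraphs : E ∈ connectedGraphs S ↔ E ⊆ pairs S ∧ IsConnectedOn S E := by
  simp [connectedGraphs]

lemma spanningTrees_subset (S : Finset α) : spanningTrees S ⊆ connectedGraphs S :=
  Finset.filter_subset _ _

lemma treeSum_nonneg {w : α × α → ℝ} (hw : ∀ p, 0 ≤ w p) (S : Finset α) : 0 ≤ treeSum w S :=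
  Finset.sum_nonneg fun _ _ => Finset.prod_nonneg fun p _ => hw p

lemma graphSum_congr {w w' : α × α → ℝ} (h : ∀ p ∈ pairs S, w p = w' p) :
    graphSum w S = graphSum w' S :=
  Finset.sum_congr rfl fun _ hE => Finset.prod_congr rfl fun p hp =>
    h p ((mem_connectedGraphs.1 hE).1 hp)

lemma treeSum_congr {w w' : α × α → ℝ} (h : ∀ p ∈ pairs S, w p = w' p) :
    treeSum w S = treeSum w' S :=
  Finset.sum_congr rfl fun _ hE => Finset.prod_congr rfl fun p hp =>
    h p ((mem_connectedGraphs.1 (spanningTrees_subset S hE)).1 hp)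

lemma ends_of_mem_splittings (hx : ⟨A, E₁, E₂⟩ ∈ splittings connectedGraphs S e) :
    (∀ p ∈ E₁, p.1 ∈ A ∧ p.2 ∈ A) ∧ ∀ p ∈ E₂, p.1 ∉ A ∧ p.2 ∉ A := by
  obtain ⟨-, hE₁, hE₂⟩ := mem_splittings.1 hx
  refine ⟨fun p hp => ?_, fun p hp => ?_⟩
  · obtain ⟨h₁, h₂, -⟩ := mem_pairs.1 ((mem_connectedGraphs.1 hE₁).1 hp)
    exact ⟨h₁, h₂⟩
  · obtain ⟨h₁, h₂, -⟩ := mem_pairs.1 ((mem_connectedGraphs.1 hE₂).1 hp)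
    exact ⟨(Finset.mem_sdiff.1 h₁).2, (Finset.mem_sdiff.1 h₂).2⟩

lemma disjoint_of_mem_splittings (hx : ⟨A, E₁, E₂⟩ ∈ splittings connectedGraphs S e) :
    Disjoint E₁ E₂ ∧ e ∉ E₁ ∪ E₂ := by
  obtain ⟨he₁, he₂⟩ := (mem_separating.1 (mem_splittings.1 hx).1).2
  obtain ⟨hin, hout⟩ := ends_of_mem_splittings hx
  refine ⟨Finset.disjoint_left.2 fun p hp₁ hp₂ => (hout p hp₂).1 (hin p hp₁).1, ?_⟩
  rw [Finset.mem_union, not_or]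
  exact ⟨fun h => he₂ (hin e h).2, fun h => (hout e h).1 he₁⟩

lemma union_eq_of_mem_splittings (hx : ⟨A, E₁, E₂⟩ ∈ splittings connectedGraphs S e) :
    component S (E₁ ∪ E₂) e.1 = A ∧
      (E₁ ∪ E₂).filter (fun p => p.1 ∈ A) = E₁ ∧ (E₁ ∪ E₂).filter (fun p => p.1 ∉ A) = E₂ := by
  obtain ⟨hA, hE₁, -⟩ := mem_splittings.1 hx
  obtain ⟨hin, hout⟩ := ends_of_mem_splittings hx
  obtain ⟨hE₁, hc₁⟩ := mem_connectedGraphs.1 hE₁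
  refine ⟨component_eq_of_forall_not_crosses (mem_separating.1 hA).1
    (mem_separating.1 hA).2.1 hE₁ hc₁ Finset.subset_union_left fun p hp => ?_, ?_, ?_⟩
  · rcases Finset.mem_union.1 hp with hp | hp
    · simp [Crosses, hin p hp]
    · simp [Crosses, hout p hp]
  all_goals
    ext p
    simp only [Finset.mem_filter, Finset.mem_union]
    have := hin p
    have := hout p
    tauto

lemma injOn_union_splittings :
    Set.InjOn (fun x : Σ _ : Finset α, Finset (α × α) × Finset (α × α) => x.2.1 ∪ x.2.2)
      ↑(splittings connectedGraphs S e) := by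
  rintro ⟨A, E₁, E₂⟩ hx ⟨A', E₁', E₂'⟩ hx' (h : E₁ ∪ E₂ = E₁' ∪ E₂')
  obtain ⟨hA, h₁, h₂⟩ := union_eq_of_mem_splittings hx
  obtain ⟨hA', h₁', h₂'⟩ := union_eq_of_mem_splittings hx'
  rw [h, hA'] at hA
  subst hA
  rw [h, h₁'] at h₁
  rw [h, h₂'] at h₂
  rw [h₁, h₂]

def bridged (S : Finset α) (e : α × α) : Finset (Finset (α × α)) :=
  ((pairs S).erase e).powerset.filter fun E => IsConnectedOn S (insert e E) ∧ ¬IsConnectedOn S E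

/-- A graph containing the hard-core pair `e` cancels against the same graph without `e`
unless only the former is connected. -/
lemma graphSum_eq_neg_sum_bridged {w : α × α → ℝ} (he : e ∈ pairs S) (hw : w e = -1) :
    graphSum w S = -∑ E ∈ bridged S e, ∏ p ∈ E, w p := by
  have hP : pairs S = insert e ((pairs S).erase e) := (Finset.insert_erase he).symm
  rw [graphSum, connectedGraphs, Finset.sum_filter, hP,
    Finset.sum_powerset_insert (Finset.notMem_erase _ _), bridged, Finset.sum_filter,
    ← Finset.sum_neg_distrib, ← Finset.sum_add_distrib]
  refine Finset.sum_congr rfl fun E hE => ?_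
  have heE : e ∉ E := fun h => Finset.notMem_erase e _ (Finset.mem_powerset.1 hE h)
  have hmono : IsConnectedOn S E → IsConnectedOn S (insert e E) :=
    fun h => h.mono (Finset.subset_insert e E)
  rw [Finset.prod_insert heE, hw]
  split_ifs <;> first | (exfalso; tauto) | ring

lemma union_mem_bridged (he : e ∈ pairs S) (hx : ⟨A, E₁, E₂⟩ ∈ splittings connectedGraphs S e) :
    E₁ ∪ E₂ ∈ bridged S e := by
  obtain ⟨hA, hE₁, hE₂⟩ := mem_splittings.1 hx
  obtain ⟨hAS, he₁, he₂⟩ := mem_separating.1 hA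
  obtain ⟨h₁, hc₁⟩ := mem_connectedGraphs.1 hE₁
  obtain ⟨h₂, hc₂⟩ := mem_connectedGraphs.1 hE₂
  have he₂' : e.2 ∈ S \ A := Finset.mem_sdiff.2 ⟨(mem_pairs.1 he).2.1, he₂⟩
  have hsub : E₁ ∪ E₂ ⊆ pairs S :=
    Finset.union_subset (h₁.trans (pairs_mono hAS)) (h₂.trans (pairs_mono Finset.sdiff_subset))
  refine Finset.mem_filter.2 ⟨Finset.mem_powerset.2 fun p hp => Finset.mem_erase.2
    ⟨fun h => (disjoint_of_mem_splittings hx).2 (h ▸ hp), hsub hp⟩,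
    isConnectedOn_insert_union he₁ he₂' h₁ h₂ hc₁ hc₂, fun hc => he₂ ?_⟩
  rw [hc.eq_of_forall_not_crosses hAS ⟨_, he₁⟩ fun p hp => ?_]
  · exact (Finset.mem_sdiff.1 he₂').1
  · rcases Finset.mem_union.1 hp with hp | hp
    exacts [not_crosses_of_mem_pairs (h₁ hp), not_crosses_of_mem_pairs_sdiff (h₂ hp)]

/-- A graph in `bridged S e` splits along the component of `e.1`, which does not contain
`e.2`; the rest stays connected because all edges of `insert e E` leaving that component end
at `e.2`. -/
lemma exists_mem_splittings_of_mem_bridged (he : e ∈ pairs S) (hE : E ∈ bridged S e) :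
    ∃ x ∈ splittings connectedGraphs S e, x.2.1 ∪ x.2.2 = E := by
  obtain ⟨hE, hc, hnc⟩ : E ⊆ (pairs S).erase e ∧ IsConnectedOn S (insert e E) ∧
      ¬IsConnectedOn S E := by simpa [bridged] using hE
  have hES : E ⊆ pairs S := hE.trans (Finset.erase_subset _ _)
  set A := component S E e.1
  have he₁ : e.1 ∈ A := mem_component_self (mem_pairs.1 he).1
  have hA : ∀ p ∈ E, ¬Crosses A p := fun p hp => not_crosses_component hES hp
  have he₂ : e.2 ∉ A := fun h₂ => by
    have hAS : A = S := hc.eq_of_forall_not_crosses component_subset ⟨_, he₁⟩ fun p hp => by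
      rcases Finset.mem_insert.1 hp with rfl | hp
      exacts [by simp [Crosses, he₁, h₂], hA p hp]
    have hc₁ : IsConnectedOn A (E.filter (·.1 ∈ A)) := isConnectedOn_component hES
    rw [hAS] at hc₁
    exact hnc (hc₁.mono (Finset.filter_subset _ _))
  have hc₂ := hc.sdiff component_subset he₂ fun p hp hpA => by
    rcases Finset.mem_insert.1 hp with rfl | hp
    exacts [Or.inr rfl, absurd hpA (hA p hp)]
  rw [Finset.filter_insert, if_neg (not_not.2 he₁)] at hc₂
  refine ⟨⟨A, E.filter (·.1 ∈ A), E.filter (·.1 ∉ A)⟩, ?_, Finset.filter_union_filter_not_eq _ _⟩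
  rw [mem_splittings, mem_separating, mem_connectedGraphs, mem_connectedGraphs]
  refine ⟨⟨component_subset, he₁, he₂⟩, ⟨?_, isConnectedOn_component hES⟩, ?_, hc₂⟩
  all_goals
    intro p hp
    obtain ⟨hp, hpA⟩ := Finset.mem_filter.1 hp
    have := mem_pairs.1 (hES hp)
    have := hA p hp
    simp only [Crosses, not_not] at this
    simp_all

lemma sum_bridged_eq_sum_splittings {w : α × α → ℝ} (he : e ∈ pairs S) :
    ∑ E ∈ bridged S e, ∏ p ∈ E, w p =
      ∑ x ∈ splittings connectedGraphs S e, (∏ p ∈ x.2.1, w p) * ∏ p ∈ x.2.2, w p := by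
  symm
  refine Finset.sum_nbij (fun x => x.2.1 ∪ x.2.2) (fun x hx => union_mem_bridged he hx)
    injOn_union_splittings (fun E hE => exists_mem_splittings_of_mem_bridged he hE)
    fun x hx => ?_
  obtain ⟨A, E₁, E₂⟩ := x
  exact (Finset.prod_union (disjoint_of_mem_splittings hx).1).symm

lemma graphSum_eq_neg_sum_separating {w : α × α → ℝ} (he : e ∈ pairs S) (hw : w e = -1) :
    graphSum w S = -∑ A ∈ separating S e, graphSum w A * graphSum w (S \ A) := by
  rw [graphSum_eq_neg_sum_bridged he hw, sum_bridged_eq_sum_splittings he]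
  simp only [graphSum]
  rw [sum_mul_sum_eq_sum_splittings]

lemma splittings_spanningTrees_subset (S : Finset α) (e : α × α) :
    splittings spanningTrees S e ⊆ splittings connectedGraphs S e := by
  rintro ⟨A, E₁, E₂⟩ hx
  obtain ⟨hA, h₁, h₂⟩ := mem_splittings.1 hx
  exact mem_splittings.2 ⟨hA, spanningTrees_subset _ h₁, spanningTrees_subset _ h₂⟩

lemma insert_union_mem_spanningTrees (he : e ∈ pairs S)
    (hx : ⟨A, E₁, E₂⟩ ∈ splittings spanningTrees S e) :
    insert e (E₁ ∪ E₂) ∈ spanningTrees S := by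
  have hx' := splittings_spanningTrees_subset S e hx
  obtain ⟨hdisj, heE⟩ := disjoint_of_mem_splittings hx'
  obtain ⟨hA, h₁, h₂⟩ := mem_splittings.1 hx
  have hE := Finset.mem_filter.1 (union_mem_bridged he hx')
  simp only [spanningTrees, Finset.mem_filter] at h₁ h₂ ⊢
  refine ⟨mem_connectedGraphs.2 ⟨Finset.insert_subset he fun p hp =>
    Finset.mem_of_mem_erase (Finset.mem_powerset.1 hE.1 hp), hE.2.1⟩, ?_⟩
  rw [Finset.card_insert_of_notMem heE, Finset.card_union_of_disjoint hdisj]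
  have := Finset.card_sdiff_add_card_eq_card (mem_separating.1 hA).1
  omega

/-- Gluing along `e` embeds pairs of trees on the two sides of a cut into spanning trees of
`S`. -/
lemma sum_separating_treeSum_le {g : α × α → ℝ} (hg : ∀ p, 0 ≤ g p) (he : e ∈ pairs S)
    (hge : g e = 1) : ∑ A ∈ separating S e, treeSum g A * treeSum g (S \ A) ≤ treeSum g S := by
  have hsub := splittings_spanningTrees_subset S e
  have hnot : ∀ x ∈ splittings spanningTrees S e, e ∉ x.2.1 ∪ x.2.2 := fun ⟨A, E₁, E₂⟩ hx =>
    (disjoint_of_mem_splittings (hsub hx)).2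
  have hinj : Set.InjOn (fun x : Σ _ : Finset α, Finset (α × α) × Finset (α × α) =>
      insert e (x.2.1 ∪ x.2.2)) ↑(splittings spanningTrees S e) := fun x hx y hy h => by
    refine injOn_union_splittings (hsub hx) (hsub hy) ?_
    simpa only [Finset.erase_insert (hnot x hx), Finset.erase_insert (hnot y hy)] using
      congrArg (Finset.erase · e) h
  simp only [treeSum]
  calc ∑ A ∈ separating S e, (∑ E ∈ spanningTrees A, ∏ p ∈ E, g p) *
          ∑ E ∈ spanningTrees (S \ A), ∏ p ∈ E, g p
      = ∑ x ∈ splittings spanningTrees S e, ∏ p ∈ insert e (x.2.1 ∪ x.2.2), g p := by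
        rw [sum_mul_sum_eq_sum_splittings]
        refine Finset.sum_congr rfl fun ⟨A, E₁, E₂⟩ hx => ?_
        rw [Finset.prod_insert (hnot _ hx), hge, one_mul,
          Finset.prod_union (disjoint_of_mem_splittings (hsub hx)).1]
    _ = ∑ E ∈ (splittings spanningTrees S e).image fun x => insert e (x.2.1 ∪ x.2.2),
          ∏ p ∈ E, g p := by rw [Finset.sum_image hinj]
    _ ≤ ∑ E ∈ spanningTrees S, ∏ p ∈ E, g p := by
        refine Finset.sum_le_sum_of_subset_of_nonneg ?_ fun _ _ _ =>
          Finset.prod_nonneg fun p _ => hg p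
        rw [Finset.image_subset_iff]
        exact fun ⟨A, E₁, E₂⟩ hx => insert_union_mem_spanningTrees he hx

end HardCoreSplitting

section Contraction

variable {α : Type*} [LinearOrder α] {S C A : Finset α} {E : Finset (α × α)} {b : α}
  {p q r : α × α}

def pairsTo (C : Finset α) (b : α) : Finset (α × α) := pairs (insert b C) \ pairs C

lemma pairs_insert (C : Finset α) (b : α) : pairs (insert b C) = pairs C ∪ pairsTo C b := by
  rw [pairsTo, Finset.union_sdiff_of_subset (pairs_mono (Finset.subset_insert _ _))]

lemma disjoint_pairs_pairsTo (C : Finset α) (b : α) : Disjoint (pairs C) (pairsTo C b) :=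
  Finset.disjoint_sdiff

lemma exists_crosses_iff_of_mem_pairsTo (hp : p ∈ pairsTo C b) :
    ∃ c ∈ C, ∀ A : Finset α, Crosses A p ↔ ¬(c ∈ A ↔ b ∈ A) := by
  rw [pairsTo, Finset.mem_sdiff, mem_pairs, mem_pairs, Finset.mem_insert,
    Finset.mem_insert] at hp
  obtain ⟨⟨h₁ | h₁, h₂ | h₂, hlt⟩, hC⟩ := hp
  · exact absurd (h₁.trans h₂.symm) hlt.ne
  · exact ⟨p.2, h₂, fun A => by rw [Crosses, h₁, @iff_comm (b ∈ A)]⟩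
  · exact ⟨p.1, h₁, fun A => by rw [Crosses, h₂]⟩
  · exact absurd ⟨h₁, h₂, hlt⟩ hC

lemma crosses_of_mem_pairsTo (hb : b ∉ C) (hp : p ∈ pairsTo C b) : Crosses C p := by
  obtain ⟨c, hc, h⟩ := exists_crosses_iff_of_mem_pairsTo hp
  rw [h]
  simp [hc, hb]

lemma crosses_or_exists_of_mem_pairsTo (hq : q ∈ pairsTo C b) (hr : r ∈ pairsTo C b)
    (hqA : Crosses A q) : Crosses A r ∨ ∃ p ∈ pairs C, Crosses A p := by
  obtain ⟨c, hc, hq⟩ := exists_crosses_iff_of_mem_pairsTo hq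
  obtain ⟨c', hc', hr⟩ := exists_crosses_iff_of_mem_pairsTo hr
  rw [hq] at hqA
  rw [hr]
  by_cases h : c ∈ A ↔ c' ∈ A
  · exact Or.inl fun h' => hqA (h.trans h')
  · exact Or.inr (exists_mem_pairs_crosses hc hc' h)

lemma IsConnectedOn.insert_union_pairs (hc : IsConnectedOn S (E ∪ pairs (insert b C)))
    (hq : q ∈ pairsTo C b) : IsConnectedOn S (insert q E ∪ pairs C) := by
  intro A hA h₁ h₂
  obtain ⟨p, hp, hpA⟩ := hc A hA h₁ h₂
  rw [pairs_insert, ← Finset.union_assoc, Finset.mem_union] at hp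
  rcases hp with hp | hp
  · rw [Finset.insert_union]
    exact ⟨p, Finset.mem_insert_of_mem hp, hpA⟩
  · rcases crosses_or_exists_of_mem_pairsTo hp hq hpA with h | ⟨p', hp', h⟩
    · exact ⟨q, Finset.mem_union_left _ (Finset.mem_insert_self _ _), h⟩
    · exact ⟨p', Finset.mem_union_right _ hp', h⟩

lemma IsConnectedOn.erase_union_pairs (hc : IsConnectedOn S (E ∪ pairs C))
    (hq : q ∈ pairsTo C b) (hr : r ∈ pairsTo C b) (hrE : r ∈ E) (hrq : r ≠ q) :
    IsConnectedOn S (E.erase q ∪ pairs C) := by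
  intro A hA h₁ h₂
  obtain ⟨p, hp, hpA⟩ := hc A hA h₁ h₂
  by_cases hpq : p = q
  · subst hpq
    rcases crosses_or_exists_of_mem_pairsTo hq hr hpA with h | ⟨p', hp', h⟩
    · exact ⟨r, Finset.mem_union_left _ (Finset.mem_erase.2 ⟨hrq, hrE⟩), h⟩
    · exact ⟨p', Finset.mem_union_right _ hp', h⟩
  · rw [Finset.mem_union] at hp
    exact ⟨p, Finset.mem_union.2 (hp.imp_left fun h => Finset.mem_erase.2 ⟨hpq, h⟩), hpA⟩

def outerEnd (C : Finset α) (p : α × α) : α := if p.1 ∈ C then p.2 else p.1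

lemma outerEnd_notMem (h : Crosses C p) : outerEnd C p ∉ C := by
  unfold outerEnd Crosses at *
  split_ifs <;> tauto

lemma outerEnd_mem (hp : p ∈ pairs S) : outerEnd C p ∈ S := by
  unfold outerEnd
  split_ifs
  exacts [(mem_pairs.1 hp).2.1, (mem_pairs.1 hp).1]

lemma mem_pairsTo_outerEnd (hp : p ∈ pairs S) (h : Crosses C p) : p ∈ pairsTo C (outerEnd C p) := by
  rw [mem_pairs] at hp
  unfold outerEnd Crosses at *
  split_ifs with h₁ <;> simp_all [pairsTo]

/-- Each edge crossing out of the cluster adds at most one vertex to it. -/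
lemma card_le_card_add_card_of_isConnectedOn (hCS : C ⊆ S) (hC : C.Nonempty)
    (hE : E ⊆ pairs S) (hc : IsConnectedOn S (E ∪ pairs C)) : S.card ≤ E.card + C.card := by
  induction E using Finset.strongInduction generalizing C with
  | H E ih =>
  rcases (S \ C).eq_empty_or_nonempty with hSC | hSC
  · have := Finset.card_le_card (Finset.sdiff_eq_empty_iff_subset.1 hSC)
    omega
  obtain ⟨q, hq, hqC⟩ := hc C hCS hC hSC
  have hqE : q ∈ E := (Finset.mem_union.1 hq).resolve_right fun h => not_crosses_of_mem_pairs h hqC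
  have hq' := mem_pairsTo_outerEnd (hE hqE) hqC
  have := ih (E.erase q) (Finset.erase_ssubset hqE) (C := insert (outerEnd C q) C)
    (Finset.insert_subset (outerEnd_mem (hE hqE)) hCS) (Finset.insert_nonempty _ _)
    ((Finset.erase_subset _ _).trans hE) (hc.mono fun p hp => ?_)
  · rw [Finset.card_erase_of_mem hqE, Finset.card_insert_of_notMem (outerEnd_notMem hqC)] at this
    have := Finset.card_pos.2 ⟨q, hqE⟩
    omega
  · rw [Finset.mem_union] at hp
    rw [pairs_insert, Finset.mem_union, Finset.mem_union, Finset.mem_erase]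
    by_cases hpq : p = q
    · exact Or.inr (Or.inr (hpq ▸ hq'))
    · tauto

def boundary (C S : Finset α) : Finset (α × α) := (pairs S).filter (Crosses C)

/-- Graphs that become connected on `S` once the vertices of `C` are merged. -/
def connectedGraphsMod (S C : Finset α) : Finset (Finset (α × α)) :=
  (pairs S \ pairs C).powerset.filter fun E => IsConnectedOn S (E ∪ pairs C)

def spanningTreesMod (S C : Finset α) : Finset (Finset (α × α)) :=
  (connectedGraphsMod S C).filter fun E => E.card + C.card = S.card

lemma mem_connectedGraphsMod :
    E ∈ connectedGraphsMod S C ↔ E ⊆ pairs S \ pairs C ∧ IsConnectedOn S (E ∪ pairs C) := by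
  simp [connectedGraphsMod]

lemma mem_spanningTreesMod : E ∈ spanningTreesMod S C ↔
    E ⊆ pairs S \ pairs C ∧ IsConnectedOn S (E ∪ pairs C) ∧ E.card + C.card = S.card := by
  simp [spanningTreesMod, mem_connectedGraphsMod, and_assoc]

lemma connectedGraphsMod_self (S : Finset α) : connectedGraphsMod S S = {∅} := by
  ext E
  simp only [mem_connectedGraphsMod, Finset.sdiff_self, Finset.subset_empty,
    Finset.mem_singleton, and_iff_left_iff_imp]
  rintro rfl
  simpa using isConnectedOn_pairs S

lemma spanningTreesMod_self (S : Finset α) : spanningTreesMod S S = {∅} := by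
  ext E
  simp only [mem_spanningTreesMod, Finset.sdiff_self, Finset.subset_empty, Finset.mem_singleton]
  refine ⟨fun h => h.1, ?_⟩
  rintro rfl
  simpa using isConnectedOn_pairs S

lemma connectedGraphsMod_singleton (S : Finset α) (r : α) :
    connectedGraphsMod S {r} = connectedGraphs S := by
  ext E
  simp [mem_connectedGraphsMod, mem_connectedGraphs]

lemma spanningTreesMod_singleton (S : Finset α) (r : α) :
    spanningTreesMod S {r} = spanningTrees S := by
  ext E
  simp [mem_spanningTreesMod, spanningTrees, mem_connectedGraphs, and_assoc]

lemma sum_sum_eq_sum_boundary (F : Finset (α × α) → α × α → ℝ)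
    (hF : ∀ E p, ¬Crosses C p → F E p = 0) :
    ∑ E ∈ connectedGraphsMod S C, ∑ p ∈ E, F E p =
      ∑ q ∈ boundary C S, ∑ E ∈ (connectedGraphsMod S C).filter (q ∈ ·), F E q := by
  have hfilter : ∀ E, ∑ p ∈ E, F E p = ∑ p ∈ E.filter (Crosses C), F E p := fun E =>
    (Finset.sum_filter_of_ne fun p _ h => by_contra fun hp => h (hF E p hp)).symm
  simp only [hfilter]
  refine Finset.sum_comm' fun E p => ?_
  simp only [Finset.mem_filter, boundary]
  constructor
  · rintro ⟨hE, hp, hpC⟩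
    exact ⟨⟨hE, hp⟩, (Finset.mem_sdiff.1 ((mem_connectedGraphsMod.1 hE).1 hp)).1, hpC⟩
  · rintro ⟨⟨hE, hp⟩, -, hpC⟩
    exact ⟨hE, hp, hpC⟩

lemma sdiff_pairs_mem_connectedGraphsMod {C' : Finset α} (hCC' : C ⊆ C')
    (hE : E ∈ connectedGraphsMod S C) : E \ pairs C' ∈ connectedGraphsMod S C' := by
  obtain ⟨hES, hc⟩ := mem_connectedGraphsMod.1 hE
  refine mem_connectedGraphsMod.2 ⟨Finset.sdiff_subset_sdiff (hES.trans Finset.sdiff_subset)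
    subset_rfl, hc.mono fun p hp => ?_⟩
  have := @pairs_mono _ _ _ _ hCC' p
  simp only [Finset.mem_union, Finset.mem_sdiff] at hp ⊢
  tauto

lemma insert_union_mem_connectedGraphsMod (hCS : C ⊆ S) (hq : q ∈ boundary C S)
    {E' : Finset (α × α)} (hE' : E' ⊆ pairsTo C (outerEnd C q))
    (hE : E ∈ connectedGraphsMod S (insert (outerEnd C q) C)) :
    insert q (E' ∪ E) ∈ connectedGraphsMod S C := by
  obtain ⟨hqS, hqC⟩ := Finset.mem_filter.1 hq
  have hqb := mem_pairsTo_outerEnd hqS hqC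
  obtain ⟨hES, hc⟩ := mem_connectedGraphsMod.1 hE
  have hC'S := pairs_mono (Finset.insert_subset (outerEnd_mem (C := C) hqS) hCS)
  have hCC' := pairs_mono (Finset.subset_insert (outerEnd C q) C)
  refine mem_connectedGraphsMod.2 ⟨fun p hp => ?_, (hc.insert_union_pairs hqb).mono
    (Finset.union_subset_union (Finset.insert_subset_insert _ Finset.subset_union_right)
      subset_rfl)⟩
  rw [Finset.mem_sdiff]
  rcases Finset.mem_insert.1 hp with rfl | hp
  · exact ⟨hqS, (Finset.mem_sdiff.1 hqb).2⟩
  rcases Finset.mem_union.1 hp with hp | hp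
  · obtain ⟨h₁, h₂⟩ := Finset.mem_sdiff.1 (hE' hp)
    exact ⟨hC'S h₁, h₂⟩
  · obtain ⟨h₁, h₂⟩ := Finset.mem_sdiff.1 (hES hp)
    exact ⟨h₁, fun h => h₂ (hCC' h)⟩

lemma insert_union_inter_sdiff_eq {β : Type*} [DecidableEq β] {q : β} {N P E₁ E₂ : Finset β}
    (hqN : q ∉ N) (hqP : q ∈ P) (hNP : N ⊆ P) (h₁ : E₁ ⊆ N) (h₂ : Disjoint E₂ P) :
    (insert q (E₁ ∪ E₂) ∩ N, insert q (E₁ ∪ E₂) \ P) = (E₁, E₂) := by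
  refine Prod.ext (Finset.ext fun p => ?_) (Finset.ext fun p => ?_) <;>
  · have := @h₁ p
    have := @hNP p
    have : p ∈ E₂ → p ∉ P := fun h => Finset.disjoint_left.1 h₂ h
    simp only [Finset.mem_inter, Finset.mem_sdiff, Finset.mem_insert, Finset.mem_union]
    by_cases hpq : p = q
    · subst hpq
      tauto
    · tauto

/-- A graph connected modulo `C` containing the boundary edge `q` is `q`, a graph connected
modulo `C ∪ {outerEnd C q}`, and an arbitrary set of the other edges joining `outerEnd C q`
to `C`. -/
lemma sum_connectedGraphsMod_filter_mem (w : α × α → ℝ) (hCS : C ⊆ S) (hq : q ∈ boundary C S) :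
    ∑ E ∈ (connectedGraphsMod S C).filter (q ∈ ·), ∏ p ∈ E.erase q, w p =
      (∏ p ∈ (pairsTo C (outerEnd C q)).erase q, (1 + w p)) *
        ∑ E ∈ connectedGraphsMod S (insert (outerEnd C q) C), ∏ p ∈ E, w p := by
  set C' := insert (outerEnd C q) C
  set N := (pairsTo C (outerEnd C q)).erase q
  have hqb := mem_pairsTo_outerEnd (Finset.mem_filter.1 hq).1 (Finset.mem_filter.1 hq).2
  have hqC' : q ∈ pairs C' := (Finset.mem_sdiff.1 hqb).1
  have hmemN : ∀ p, p ∈ N ↔ p ≠ q ∧ p ∈ pairs C' ∧ p ∉ pairs C := fun p => by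
    simp [N, C', pairsTo]
  have hsplit : ∀ E ∈ (connectedGraphsMod S C).filter (q ∈ ·),
      E.erase q = (E ∩ N) ∪ (E \ pairs C') := fun E hE => by
    have hES := (mem_connectedGraphsMod.1 (Finset.mem_filter.1 hE).1).1
    ext p
    have hp := @hES p
    have hpq : p = q → p ∈ pairs C' := fun h => h ▸ hqC'
    simp only [Finset.mem_erase, Finset.mem_union, Finset.mem_inter, Finset.mem_sdiff,
      hmemN] at hp ⊢
    tauto
  rw [Finset.prod_one_add, Finset.sum_mul_sum, ← Finset.sum_product']
  refine Finset.sum_nbij' (fun E => (E ∩ N, E \ pairs C')) (fun x => insert q (x.1 ∪ x.2))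
    (fun E hE => ?_) (fun x hx => ?_) (fun E hE => ?_) (fun x hx => ?_) fun E hE => ?_
  · exact Finset.mem_product.2 ⟨Finset.mem_powerset.2 Finset.inter_subset_right,
      sdiff_pairs_mem_connectedGraphsMod (Finset.subset_insert _ _) (Finset.mem_filter.1 hE).1⟩
  · obtain ⟨hh, hg⟩ := Finset.mem_product.1 hx
    exact Finset.mem_filter.2 ⟨insert_union_mem_connectedGraphsMod hCS hq
      ((Finset.mem_powerset.1 hh).trans (Finset.erase_subset _ _)) hg,
      Finset.mem_insert_self _ _⟩
  · simp only
    rw [← hsplit E hE, Finset.insert_erase (Finset.mem_filter.1 hE).2]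
  · obtain ⟨h, g⟩ := x
    obtain ⟨hh, hg⟩ : h ⊆ N ∧ g ∈ connectedGraphsMod S C' := by simpa using hx
    refine insert_union_inter_sdiff_eq (fun h => ((hmemN q).1 h).1 rfl) hqC'
      (fun p hp => ((hmemN p).1 hp).2.1) hh (Finset.disjoint_left.2 fun p hp =>
        (Finset.mem_sdiff.1 ((mem_connectedGraphsMod.1 hg).1 hp)).2)
  · rw [hsplit E hE, Finset.prod_union]
    exact Finset.disjoint_left.2 fun p hp hp' =>
      (Finset.mem_sdiff.1 hp').2 ((hmemN p).1 (Finset.mem_inter.1 hp).2).2.1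

end Contraction

section Scaling

variable {α : Type*}

def mayer (x : ℝ) : ℝ := Real.exp (-x) - 1

def scaleCrossing (C : Finset α) (t : ℝ) (u : α × α → ℝ) (p : α × α) : ℝ :=
  if Crosses C p then t * u p else u p

lemma scaleCrossing_one (C : Finset α) (u : α × α → ℝ) : scaleCrossing C 1 u = u := by
  funext p
  simp [scaleCrossing]

lemma hasDerivAt_mayer_scaleCrossing {C : Finset α} {u : α × α → ℝ} (p : α × α) (t : ℝ) :
    HasDerivAt (fun t => mayer (scaleCrossing C t u p))
      (if Crosses C p then Real.exp (-(t * u p)) * -u p else 0) t := by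
  unfold mayer scaleCrossing
  split_ifs
  · exact ((hasDerivAt_mul_const (u p)).neg.exp).sub_const 1
  · exact hasDerivAt_const _ _

inductive Interpolated (S : Finset α) (v : α × α → ℝ) : Finset α → (α × α → ℝ) → Prop
  | base {r : α} (hr : r ∈ S) : Interpolated S v {r} v
  | step {C : Finset α} {u : α × α → ℝ} (h : Interpolated S v C u) {b : α} (hb : b ∈ S)
      (hbC : b ∉ C) {t : ℝ} (ht₀ : 0 ≤ t) (ht₁ : t ≤ 1) :
      Interpolated S v (insert b C) (scaleCrossing C t u)

lemma Interpolated.subset {S C : Finset α} {v u : α × α → ℝ} (h : Interpolated S v C u) :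
    C ⊆ S := by
  induction h with
  | base hr => simpa using hr
  | step _ hb _ _ _ ih => exact Finset.insert_subset hb ih

lemma Interpolated.nonempty {S C : Finset α} {v u : α × α → ℝ} (h : Interpolated S v C u) :
    C.Nonempty := by
  cases h with
  | base => exact Finset.singleton_nonempty _
  | step => exact Finset.insert_nonempty _ _

end Scaling

section Interpolation

variable {α : Type*} [LinearOrder α]

def ursellMod (u : α × α → ℝ) (S C : Finset α) : ℝ :=
  ∑ E ∈ connectedGraphsMod S C, ∏ p ∈ E, mayer (u p)

variable {S C : Finset α} {u : α × α → ℝ}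

lemma ursellMod_scaleCrossing_zero (hCS : C ⊆ S) (hC : C.Nonempty) (hSC : (S \ C).Nonempty) :
    ursellMod (scaleCrossing C 0 u) S C = 0 := by
  refine Finset.sum_eq_zero fun E hE => ?_
  obtain ⟨hES, hc⟩ := mem_connectedGraphsMod.1 hE
  obtain ⟨q, hq, hqC⟩ := hc C hCS hC hSC
  have hqE := (Finset.mem_union.1 hq).resolve_right fun h => not_crosses_of_mem_pairs h hqC
  exact Finset.prod_eq_zero hqE (by simp [scaleCrossing, hqC, mayer])

lemma continuous_ursellMod_scaleCrossing (C' : Finset α) :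
    Continuous fun t => ursellMod (scaleCrossing C t u) S C' :=
  continuous_finsetSum _ fun _ _ => continuous_finsetProd _ fun p _ =>
    continuous_iff_continuousAt.2 fun t => (hasDerivAt_mayer_scaleCrossing p t).continuousAt

/-- Only the interactions across `∂C` depend on `t`; differentiating the Mayer factor of a
boundary edge `q` and resumming over the other edges joining `outerEnd C q` to `C` gives the
Ursell function modulo the enlarged cluster. -/
lemma hasDerivAt_ursellMod_scaleCrossing (hCS : C ⊆ S) (t : ℝ) :
    HasDerivAt (fun t => ursellMod (scaleCrossing C t u) S C)
      (∑ q ∈ boundary C S, Real.exp (-(t * ∑ p ∈ pairsTo C (outerEnd C q), u p)) * -u q *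
        ursellMod (scaleCrossing C t u) S (insert (outerEnd C q) C)) t := by
  refine (HasDerivAt.fun_sum (u := connectedGraphsMod S C) fun E _ =>
    HasDerivAt.fun_finsetProd (u := E) fun p _ =>
      hasDerivAt_mayer_scaleCrossing (C := C) (u := u) p t).congr_deriv ?_
  simp only [smul_eq_mul]
  rw [sum_sum_eq_sum_boundary _ fun E p hp => by simp [hp]]
  refine Finset.sum_congr rfl fun q hq => ?_
  obtain ⟨hqS, hqC⟩ := Finset.mem_filter.1 hq
  have hqb := mem_pairsTo_outerEnd hqS hqC
  simp only [if_pos hqC]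
  have hN : ∏ p ∈ (pairsTo C (outerEnd C q)).erase q, (1 + mayer (scaleCrossing C t u p)) =
      Real.exp (-(t * ∑ p ∈ (pairsTo C (outerEnd C q)).erase q, u p)) := by
    rw [Finset.mul_sum, ← Finset.sum_neg_distrib, Real.exp_sum]
    refine Finset.prod_congr rfl fun p hp => ?_
    simp [mayer, scaleCrossing,
      crosses_of_mem_pairsTo (outerEnd_notMem hqC) (Finset.mem_of_mem_erase hp)]
  rw [← Finset.sum_mul, sum_connectedGraphsMod_filter_mem _ hCS hq, hN, ursellMod,
    ← Finset.add_sum_erase _ _ hqb, mul_add, neg_add, Real.exp_add]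
  ring

lemma ursellMod_eq_sum_integral (hCS : C ⊆ S) (hC : C.Nonempty) (hSC : (S \ C).Nonempty) :
    ursellMod u S C = ∑ q ∈ boundary C S, ∫ t in (0 : ℝ)..1,
      Real.exp (-(t * ∑ p ∈ pairsTo C (outerEnd C q), u p)) * -u q *
        ursellMod (scaleCrossing C t u) S (insert (outerEnd C q) C) := by
  have hcont : ∀ q, Continuous fun t =>
      Real.exp (-(t * ∑ p ∈ pairsTo C (outerEnd C q), u p)) * -u q *
        ursellMod (scaleCrossing C t u) S (insert (outerEnd C q) C) := fun q =>
    (by fun_prop : Continuous fun t =>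
      Real.exp (-(t * ∑ p ∈ pairsTo C (outerEnd C q), u p)) * -u q).mul
      (continuous_ursellMod_scaleCrossing _)
  rw [← intervalIntegral.integral_finsetSum fun q _ => (hcont q).intervalIntegrable 0 1,
    intervalIntegral.integral_eq_sub_of_hasDerivAt
      (fun t _ => hasDerivAt_ursellMod_scaleCrossing hCS t)
      ((continuous_finsetSum _ fun q _ => hcont q).intervalIntegrable 0 1),
    scaleCrossing_one, ursellMod_scaleCrossing_zero hCS hC hSC, sub_zero]

end Interpolation

section Stability

variable {α : Type*} [LinearOrder α]

def energy (u : α × α → ℝ) (C : Finset α) : ℝ := ∑ p ∈ pairs C, u p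

def IsStableOn (S : Finset α) (v : α × α → ℝ) (B : α → ℝ) : Prop :=
  ∀ T ⊆ S, -∑ i ∈ T, B i ≤ energy v T

def blockEnergy (u : α × α → ℝ) (S : Finset α) (f : α → ℕ) : ℝ :=
  ∑ p ∈ (pairs S).filter (fun p => f p.1 = f p.2), u p

lemma IsStableOn.neg_sum_le_blockEnergy {S : Finset α} {v : α × α → ℝ} {B : α → ℝ}
    (hv : IsStableOn S v B) (f : α → ℕ) : -∑ i ∈ S, B i ≤ blockEnergy v S f := by
  have hblock : ∀ ℓ, ((pairs S).filter fun p => f p.1 = f p.2).filter (fun p => f p.1 = ℓ) =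
      pairs (S.filter (f · = ℓ)) := fun ℓ => by
    ext p
    simp only [Finset.mem_filter, mem_pairs]
    constructor
    · rintro ⟨⟨⟨h₁, h₂, h⟩, hf⟩, rfl⟩
      exact ⟨⟨h₁, rfl⟩, ⟨h₂, hf.symm⟩, h⟩
    · rintro ⟨⟨h₁, rfl⟩, ⟨h₂, hf⟩, h⟩
      exact ⟨⟨⟨h₁, h₂, h⟩, hf.symm⟩, rfl⟩
  rw [blockEnergy, ← Finset.sum_fiberwise_of_maps_to (g := fun p => f p.1) (t := S.image f)
    fun p hp => Finset.mem_image_of_mem f (mem_pairs.1 (Finset.mem_filter.1 hp).1).1,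
    ← Finset.sum_fiberwise_of_maps_to (g := f) (t := S.image f)
      fun i hi => Finset.mem_image_of_mem f hi, ← Finset.sum_neg_distrib]
  simp only [hblock]
  exact Finset.sum_le_sum fun ℓ _ => hv _ (Finset.filter_subset _ _)

namespace Interpolated

variable {S C : Finset α} {v u : α × α → ℝ}

/-- Splitting `C` off as a separate block shows that `blockEnergy` without the crossing
interactions is bounded below too; the scaled energy is a convex combination of the two. -/
lemma neg_sum_le_blockEnergy {B : α → ℝ} (hv : IsStableOn S v B) (h : Interpolated S v C u)
    (f : α → ℕ) (hf : ∀ c ∈ C, ∀ c' ∈ C, f c = f c') : -∑ i ∈ S, B i ≤ blockEnergy u S f := by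
  induction h generalizing f with
  | base => exact hv.neg_sum_le_blockEnergy f
  | @step C u h b hb hbC t ht₀ ht₁ ih =>
    have hfC : ∀ c ∈ C, ∀ c' ∈ C, f c = f c' := fun c hc c' hc' =>
      hf c (Finset.mem_insert_of_mem hc) c' (Finset.mem_insert_of_mem hc')
    set P := (pairs S).filter fun p => f p.1 = f p.2
    have hsplit : blockEnergy (scaleCrossing C t u) S f =
        t * ∑ p ∈ P.filter (Crosses C), u p + ∑ p ∈ P.filter (¬Crosses C ·), u p := by
      rw [blockEnergy, ← Finset.sum_filter_add_sum_filter_not P (Crosses C), Finset.mul_sum]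
      congr 1 <;> refine Finset.sum_congr rfl fun p hp => ?_ <;>
        simp [scaleCrossing, (Finset.mem_filter.1 hp).2]
    have h₁ := ih f hfC
    rw [blockEnergy, ← Finset.sum_filter_add_sum_filter_not P (Crosses C)] at h₁
    let f' : α → ℕ := fun x => if x ∈ C then S.sup f + 1 else f x
    have h₀ : blockEnergy u S f' = ∑ p ∈ P.filter (¬Crosses C ·), u p := by
      rw [blockEnergy, Finset.filter_filter]
      refine Finset.sum_congr (Finset.filter_congr fun p hp => ?_) fun _ _ => rfl
      obtain ⟨hp₁, hp₂, -⟩ := mem_pairs.1 hp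
      have := Finset.le_sup (f := f) hp₁
      have := Finset.le_sup (f := f) hp₂
      by_cases hc₁ : p.1 ∈ C <;> by_cases hc₂ : p.2 ∈ C
      · simp [f', Crosses, hc₁, hc₂, hfC _ hc₁ _ hc₂]
      all_goals simp [f', Crosses, hc₁, hc₂]; try omega
    have h₂ := ih f' fun c hc c' hc' => by simp [f', hc, hc']
    rw [h₀] at h₂
    rw [hsplit]
    nlinarith

lemma neg_sum_le_energy {B : α → ℝ} (hv : IsStableOn S v B) (h : Interpolated S v C u) :
    -∑ i ∈ S, B i ≤ energy u S := by
  simpa [blockEnergy, energy] using h.neg_sum_le_blockEnergy hv (fun _ => 0) fun _ _ _ _ => rfl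

end Interpolated

end Stability

section TreeBound

variable {α : Type*} [LinearOrder α]

def treeSumMod (u : α × α → ℝ) (S C : Finset α) : ℝ :=
  ∑ F ∈ spanningTreesMod S C, ∏ p ∈ F, |u p|

variable {S C : Finset α} {u : α × α → ℝ}

lemma energy_scaleCrossing_insert {b : α} (hbC : b ∉ C) (t : ℝ) :
    energy (scaleCrossing C t u) (insert b C) = energy u C + t * ∑ p ∈ pairsTo C b, u p := by
  rw [energy, energy, pairs_insert, Finset.sum_union (disjoint_pairs_pairsTo C b),
    Finset.mul_sum]
  congr 1 <;> refine Finset.sum_congr rfl fun p hp => ?_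
  · simp [scaleCrossing, not_crosses_of_mem_pairs hp]
  · simp [scaleCrossing, crosses_of_mem_pairsTo hbC hp]

lemma treeSumMod_scaleCrossing {t : ℝ} (ht : 0 ≤ t) (C' : Finset α) :
    treeSumMod (scaleCrossing C t u) S C' =
      ∑ F ∈ spanningTreesMod S C', t ^ (F.filter (Crosses C)).card * ∏ p ∈ F, |u p| := by
  refine Finset.sum_congr rfl fun F _ => ?_
  rw [← Finset.prod_filter_mul_prod_filter_not F (Crosses C),
    ← Finset.prod_filter_mul_prod_filter_not F (Crosses C) (fun p => |u p|),
    ← mul_assoc, ← Finset.prod_const, ← Finset.prod_mul_distrib]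
  congr 1 <;> refine Finset.prod_congr rfl fun p hp => ?_
  · simp [scaleCrossing, (Finset.mem_filter.1 hp).2, abs_mul, abs_of_nonneg ht]
  · simp [scaleCrossing, (Finset.mem_filter.1 hp).2]

lemma treeSumMod_self (S : Finset α) : treeSumMod u S S = 1 := by
  simp [treeSumMod, spanningTreesMod_self]

lemma ursellMod_self (S : Finset α) : ursellMod u S S = 1 := by
  simp [ursellMod, connectedGraphsMod_self]

lemma notMem_of_mem_spanningTreesMod_insert {q : α × α} (hq : q ∈ boundary C S)
    {F : Finset (α × α)} (hF : F ∈ spanningTreesMod S (insert (outerEnd C q) C)) : q ∉ F :=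
  fun h => (Finset.mem_sdiff.1 ((mem_spanningTreesMod.1 hF).1 h)).2 (Finset.mem_sdiff.1
    (mem_pairsTo_outerEnd (Finset.mem_filter.1 hq).1 (Finset.mem_filter.1 hq).2)).1

lemma insert_mem_spanningTreesMod {q : α × α} (hq : q ∈ boundary C S)
    {F : Finset (α × α)} (hF : F ∈ spanningTreesMod S (insert (outerEnd C q) C)) :
    insert q F ∈ spanningTreesMod S C := by
  obtain ⟨hqS, hqC⟩ := Finset.mem_filter.1 hq
  have hqb := mem_pairsTo_outerEnd hqS hqC
  obtain ⟨hFS, hc, hcard⟩ := mem_spanningTreesMod.1 hF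
  have hqF := notMem_of_mem_spanningTreesMod_insert hq hF
  have hCC' := pairs_mono (Finset.subset_insert (outerEnd C q) C)
  refine mem_spanningTreesMod.2 ⟨Finset.insert_subset (Finset.mem_sdiff.2
    ⟨hqS, (Finset.mem_sdiff.1 hqb).2⟩) (hFS.trans (Finset.sdiff_subset_sdiff subset_rfl hCC')),
    hc.insert_union_pairs hqb, ?_⟩
  rw [Finset.card_insert_of_notMem hqF, ← hcard,
    Finset.card_insert_of_notMem (outerEnd_notMem hqC)]
  ring

/-- A tree modulo `C` has no second edge from `outerEnd C q` to `C` besides `q`: otherwise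
removing `q` would leave a graph connected modulo `C` with too few edges. -/
lemma erase_mem_spanningTreesMod (hCS : C ⊆ S) (hC : C.Nonempty) {F : Finset (α × α)}
    (hF : F ∈ spanningTreesMod S C) {q : α × α} (hqF : q ∈ F) (hqC : Crosses C q) :
    F.erase q ∈ spanningTreesMod S (insert (outerEnd C q) C) := by
  obtain ⟨hFS, hc, hcard⟩ := mem_spanningTreesMod.1 hF
  have hqS := (Finset.mem_sdiff.1 (hFS hqF)).1
  have hqb := mem_pairsTo_outerEnd hqS hqC
  have hF₀ := Finset.card_pos.2 ⟨q, hqF⟩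
  refine mem_spanningTreesMod.2 ⟨fun r hr => ?_, hc.mono fun p hp => ?_, ?_⟩
  · obtain ⟨hrq, hrF⟩ := Finset.mem_erase.1 hr
    obtain ⟨hrS, hrC⟩ := Finset.mem_sdiff.1 (hFS hrF)
    refine Finset.mem_sdiff.2 ⟨hrS, fun hrC' => ?_⟩
    have hc' := hc.erase_union_pairs hqb (Finset.mem_sdiff.2 ⟨hrC', hrC⟩) hrF hrq
    have := card_le_card_add_card_of_isConnectedOn hCS hC
      (((Finset.erase_subset _ _).trans hFS).trans Finset.sdiff_subset) hc'
    rw [Finset.card_erase_of_mem hqF] at this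
    omega
  · rw [Finset.mem_union] at hp
    rw [pairs_insert, Finset.mem_union, Finset.mem_union, Finset.mem_erase]
    by_cases hpq : p = q
    · exact Or.inr (Or.inr (hpq ▸ hqb))
    · tauto
  · rw [Finset.card_erase_of_mem hqF, Finset.card_insert_of_notMem (outerEnd_notMem hqC)]
    omega

lemma treeSumMod_eq_sum_sigma (hCS : C ⊆ S) (hC : C.Nonempty) (hSC : (S \ C).Nonempty) :
    treeSumMod u S C = ∑ x ∈ (spanningTreesMod S C).sigma (·.filter (Crosses C)),
      ((x.1.filter (Crosses C)).card : ℝ)⁻¹ * ∏ p ∈ x.1, |u p| := by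
  rw [treeSumMod, Finset.sum_sigma]
  refine Finset.sum_congr rfl fun F hF => ?_
  obtain ⟨-, hc, -⟩ := mem_spanningTreesMod.1 hF
  obtain ⟨q, hq, hqC⟩ := hc C hCS hC hSC
  have hqF := (Finset.mem_union.1 hq).resolve_right fun h => not_crosses_of_mem_pairs h hqC
  have hk : ((F.filter (Crosses C)).card : ℝ) ≠ 0 :=
    Nat.cast_ne_zero.2 (Finset.card_pos.2 ⟨q, Finset.mem_filter.2 ⟨hqF, hqC⟩⟩).ne'
  dsimp only
  rw [Finset.sum_const, nsmul_eq_mul, ← mul_assoc, mul_inv_cancel₀ hk, one_mul]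

/-- Each tree modulo `C` arises from exactly `k` pairs `(q, F)`, where `k ≥ 1` is its number
of edges crossing `∂C`, and then `F` has `k - 1` of them. -/
lemma sum_boundary_treeSumMod_eq (hCS : C ⊆ S) (hC : C.Nonempty) (hSC : (S \ C).Nonempty) :
    ∑ q ∈ boundary C S, |u q| * ∑ F ∈ spanningTreesMod S (insert (outerEnd C q) C),
      ((F.filter (Crosses C)).card + 1 : ℝ)⁻¹ * ∏ p ∈ F, |u p| = treeSumMod u S C := by
  simp only [Finset.mul_sum]
  rw [treeSumMod_eq_sum_sigma hCS hC hSC]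
  refine Eq.trans (Finset.sum_sigma' (boundary C S)
    (fun q => spanningTreesMod S (insert (outerEnd C q) C)) fun q F =>
      |u q| * (((F.filter (Crosses C)).card + 1 : ℝ)⁻¹ * ∏ p ∈ F, |u p|)) ?_
  refine Finset.sum_nbij' (fun x => ⟨insert x.1 x.2, x.1⟩) (fun x => ⟨x.2, x.1.erase x.2⟩)
    ?_ ?_ ?_ ?_ ?_
  · rintro ⟨q, F⟩ hx
    obtain ⟨hq, hF⟩ := Finset.mem_sigma.1 hx
    exact Finset.mem_sigma.2 ⟨insert_mem_spanningTreesMod hq hF,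
      Finset.mem_filter.2 ⟨Finset.mem_insert_self _ _, (Finset.mem_filter.1 hq).2⟩⟩
  · rintro ⟨F, q⟩ hx
    obtain ⟨hF, hq⟩ := Finset.mem_sigma.1 hx
    obtain ⟨hqF, hqC⟩ := Finset.mem_filter.1 hq
    have hqS := (Finset.mem_sdiff.1 ((mem_spanningTreesMod.1 hF).1 hqF)).1
    exact Finset.mem_sigma.2 ⟨Finset.mem_filter.2 ⟨hqS, hqC⟩,
      erase_mem_spanningTreesMod hCS hC hF hqF hqC⟩
  · rintro ⟨q, F⟩ hx
    obtain ⟨hq, hF⟩ := Finset.mem_sigma.1 hx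
    simp [Finset.erase_insert (notMem_of_mem_spanningTreesMod_insert hq hF)]
  · rintro ⟨F, q⟩ hx
    simp [Finset.insert_erase (Finset.mem_filter.1 (Finset.mem_sigma.1 hx).2).1]
  · rintro ⟨q, F⟩ hx
    obtain ⟨hq, hF⟩ := Finset.mem_sigma.1 hx
    have hqF := notMem_of_mem_spanningTreesMod_insert hq hF
    dsimp only
    rw [Finset.filter_insert, if_pos (Finset.mem_filter.1 hq).2, Finset.card_insert_of_notMem
      fun h => hqF (Finset.mem_filter.1 h).1, Finset.prod_insert hqF]
    push_cast
    ring

lemma integral_sum_pow_mul {ι : Type*} (s : Finset ι) (k : ι → ℕ) (c : ι → ℝ) :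
    ∫ t in (0 : ℝ)..1, ∑ i ∈ s, t ^ k i * c i = ∑ i ∈ s, ((k i : ℝ) + 1)⁻¹ * c i := by
  rw [intervalIntegral.integral_finsetSum (f := fun i t => t ^ k i * c i) fun i _ =>
    ((continuous_pow (k i)).mul continuous_const).intervalIntegrable 0 1]
  refine Finset.sum_congr rfl fun i _ => ?_
  rw [intervalIntegral.integral_mul_const, integral_pow, one_pow, zero_pow (Nat.succ_ne_zero _),
    sub_zero, one_div]

/-- The factor `e^{-t ∑ u}` produced by differentiation cancels the growth of the energy of
the enlarged cluster. -/
lemma abs_exp_mul_ursellMod_le {K t : ℝ} {b : α} {q : α × α} (hbC : b ∉ C) (ht : 0 ≤ t)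
    (h : |ursellMod (scaleCrossing C t u) S (insert b C)| ≤
      Real.exp K * (Real.exp (energy (scaleCrossing C t u) (insert b C)) *
        treeSumMod (scaleCrossing C t u) S (insert b C))) :
    |Real.exp (-(t * ∑ p ∈ pairsTo C b, u p)) * -u q *
        ursellMod (scaleCrossing C t u) S (insert b C)| ≤
      Real.exp K * Real.exp (energy u C) * (|u q| * ∑ F ∈ spanningTreesMod S (insert b C),
        t ^ (F.filter (Crosses C)).card * ∏ p ∈ F, |u p|) := by
  rw [energy_scaleCrossing_insert hbC, treeSumMod_scaleCrossing ht, Real.exp_add] at h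
  rw [abs_mul, abs_mul, abs_neg, abs_of_pos (Real.exp_pos _)]
  calc _ ≤ Real.exp (-(t * ∑ p ∈ pairsTo C b, u p)) * |u q| * (Real.exp K *
        (Real.exp (energy u C) * Real.exp (t * ∑ p ∈ pairsTo C b, u p) *
          ∑ F ∈ spanningTreesMod S (insert b C),
            t ^ (F.filter (Crosses C)).card * ∏ p ∈ F, |u p|)) := by gcongr
    _ = _ := by
      rw [Real.exp_neg]
      field_simp

/-- The integrals `∫₀¹ tᵏ dt = 1 / (k + 1)` are the weights in `sum_boundary_treeSumMod_eq`. -/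
lemma abs_ursellMod_le_of_forall_insert {K : ℝ} (hCS : C ⊆ S) (hC : C.Nonempty)
    (hSC : (S \ C).Nonempty) (ih : ∀ q ∈ boundary C S, ∀ t ∈ Set.Icc (0 : ℝ) 1,
      |ursellMod (scaleCrossing C t u) S (insert (outerEnd C q) C)| ≤
        Real.exp K * (Real.exp (energy (scaleCrossing C t u) (insert (outerEnd C q) C)) *
          treeSumMod (scaleCrossing C t u) S (insert (outerEnd C q) C))) :
    |ursellMod u S C| ≤ Real.exp K * (Real.exp (energy u C) * treeSumMod u S C) := by
  rw [ursellMod_eq_sum_integral hCS hC hSC, ← sum_boundary_treeSumMod_eq hCS hC hSC,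
    Finset.mul_sum, Finset.mul_sum]
  refine (Finset.abs_sum_le_sum_abs _ _).trans (Finset.sum_le_sum fun q hq => ?_)
  set b := outerEnd C q
  have hbC : b ∉ C := outerEnd_notMem (Finset.mem_filter.1 hq).2
  set G : ℝ → ℝ := fun t => Real.exp K * Real.exp (energy u C) * (|u q| *
    ∑ F ∈ spanningTreesMod S (insert b C), t ^ (F.filter (Crosses C)).card * ∏ p ∈ F, |u p|)
  have hG : ∫ t in (0 : ℝ)..1, G t = Real.exp K * (Real.exp (energy u C) * (|u q| *
      ∑ F ∈ spanningTreesMod S (insert b C),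
        ((F.filter (Crosses C)).card + 1 : ℝ)⁻¹ * ∏ p ∈ F, |u p|)) := by
    rw [intervalIntegral.integral_const_mul, intervalIntegral.integral_const_mul,
      integral_sum_pow_mul]
    ring
  have hle : ∀ t ∈ Set.Icc (0 : ℝ) 1, |Real.exp (-(t * ∑ p ∈ pairsTo C b, u p)) * -u q *
      ursellMod (scaleCrossing C t u) S (insert b C)| ≤ G t := fun t ht =>
    abs_exp_mul_ursellMod_le hbC ht.1 (ih q hq t ht)
  rw [← hG]
  refine (intervalIntegral.abs_integral_le_integral_abs zero_le_one).trans
    (intervalIntegral.integral_mono_on zero_le_one ?_ ?_ hle)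
  · exact (((by fun_prop : Continuous fun t =>
      Real.exp (-(t * ∑ p ∈ pairsTo C b, u p)) * -u q).mul
      (continuous_ursellMod_scaleCrossing _)).abs).intervalIntegrable 0 1
  · exact (by fun_prop : Continuous G).intervalIntegrable 0 1

lemma Interpolated.abs_ursellMod_le {v : α × α → ℝ} {B : α → ℝ} (hv : IsStableOn S v B)
    (h : Interpolated S v C u) :
    |ursellMod u S C| ≤ Real.exp (∑ i ∈ S, B i) * (Real.exp (energy u C) * treeSumMod u S C) := by
  obtain ⟨k, hk⟩ : ∃ k, (S \ C).card = k := ⟨_, rfl⟩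
  induction k generalizing C u with
  | zero =>
    obtain rfl : C = S := h.subset.antisymm (Finset.sdiff_eq_empty_iff_subset.1
      (Finset.card_eq_zero.1 hk))
    rw [ursellMod_self, treeSumMod_self, abs_one, mul_one, ← Real.exp_add]
    exact Real.one_le_exp (by linarith [h.neg_sum_le_energy hv])
  | succ k ih =>
    refine abs_ursellMod_le_of_forall_insert h.subset h.nonempty
      (Finset.card_pos.1 (by omega)) fun q hq t ht => ih ?_ ?_
    · exact h.step (outerEnd_mem (Finset.mem_filter.1 hq).1)
        (outerEnd_notMem (Finset.mem_filter.1 hq).2) ht.1 ht.2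
    · rw [Finset.sdiff_insert, Finset.card_erase_of_mem (Finset.mem_sdiff.2
        ⟨outerEnd_mem (Finset.mem_filter.1 hq).1, outerEnd_notMem (Finset.mem_filter.1 hq).2⟩),
        hk, Nat.add_sub_cancel]

theorem abs_graphSum_mayer_le_of_isStableOn {v : α × α → ℝ} {B : α → ℝ}
    (hv : IsStableOn S v B) {r : α} (hr : r ∈ S) :
    |graphSum (fun p => mayer (v p)) S| ≤
      Real.exp (∑ i ∈ S, B i) * treeSum (fun p => |v p|) S := by
  have := (Interpolated.base hr).abs_ursellMod_le hv
  rwa [ursellMod, connectedGraphsMod_singleton, treeSumMod, spanningTreesMod_singleton, energy,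
    pairs_singleton, Finset.sum_empty, Real.exp_zero, one_mul] at this

end TreeBound

section HardCore

variable {α : Type*} [LinearOrder α]

theorem abs_graphSum_le_exp_mul_treeSum {hard : α × α → Prop} {w g v : α × α → ℝ}
    {B : α → ℝ} (hw : ∀ p, hard p → w p = -1) (hg : ∀ p, hard p → g p = 1)
    (hw' : ∀ p, ¬hard p → w p = mayer (v p)) (hg' : ∀ p, ¬hard p → g p = |v p|)
    {S : Finset α} (hstab : ∀ T ⊆ S, (∀ p ∈ pairs T, ¬hard p) → -∑ i ∈ T, B i ≤ energy v T)
    (hS : S.Nonempty) :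
    |graphSum w S| ≤ Real.exp (∑ i ∈ S, B i) * treeSum g S := by
  have hg₀ : ∀ p, 0 ≤ g p := fun p => by
    by_cases h : hard p
    · simp [hg p h]
    · simp [hg' p h]
  induction S using Finset.strongInduction with
  | H S ih =>
  by_cases hhard : ∃ e ∈ pairs S, hard e
  · obtain ⟨e, he, heh⟩ := hhard
    rw [graphSum_eq_neg_sum_separating he (hw e heh), abs_neg]
    refine (Finset.abs_sum_le_sum_abs _ _).trans ?_
    refine (Finset.sum_le_sum fun A hA => ?_).trans ((Finset.mul_sum _ _ _).symm.le.trans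
      (mul_le_mul_of_nonneg_left (sum_separating_treeSum_le hg₀ he (hg e heh))
        (Real.exp_pos _).le))
    obtain ⟨hAS, he₁, he₂⟩ := mem_separating.1 hA
    have he₂S := (mem_pairs.1 he).2.1
    have hA' : S \ A ⊂ S := Finset.sdiff_ssubset hAS ⟨_, he₁⟩
    have hA : A ⊂ S := Finset.ssubset_iff_subset_ne.2 ⟨hAS, fun h => he₂ (h ▸ he₂S)⟩
    rw [abs_mul, ← Finset.sum_sdiff hAS, add_comm, Real.exp_add, mul_mul_mul_comm]
    exact mul_le_mul (ih _ hA (fun T hT => hstab T (hT.trans hAS)) ⟨_, he₁⟩)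
      (ih _ hA' (fun T hT => hstab T (hT.trans Finset.sdiff_subset))
        ⟨_, Finset.mem_sdiff.2 ⟨he₂S, he₂⟩⟩) (abs_nonneg _)
      (mul_nonneg (Real.exp_pos _).le (treeSum_nonneg hg₀ _))
  · push Not at hhard
    obtain ⟨r, hr⟩ := hS
    rw [graphSum_congr fun p hp => hw' p (hhard p hp),
      treeSum_congr fun p hp => hg' p (hhard p hp)]
    exact abs_graphSum_mayer_le_of_isStableOn
      (fun T hT => hstab T hT fun p hp => hhard p (pairs_mono hT hp)) hr

end HardCore

lemma sum_pairs_orderEmbOfFin {α M : Type*} [LinearOrder α] [AddCommMonoid M] (T : Finset α)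
    (f : α × α → M) :
    ∑ p ∈ (Finset.univ : Finset (Fin T.card × Fin T.card)).filter (fun p => p.1 < p.2),
      f (T.orderEmbOfFin rfl p.1, T.orderEmbOfFin rfl p.2) = ∑ p ∈ pairs T, f p := by
  set g := T.orderEmbOfFin rfl
  refine Finset.sum_nbij (fun p => (g p.1, g p.2)) (fun p hp => ?_) (fun p _ p' _ h => ?_)
    (fun p hp => ?_) fun _ _ => rfl
  · exact mem_pairs.2 ⟨T.orderEmbOfFin_mem rfl _, T.orderEmbOfFin_mem rfl _,
      g.strictMono (Finset.mem_filter.1 hp).2⟩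
  · simp only [Prod.mk.injEq] at h
    exact Prod.ext (g.injective h.1) (g.injective h.2)
  · have hg : ∀ x ∈ T, ∃ i, g i = x := fun x hx => by
      rwa [← Finset.mem_coe, ← T.range_orderEmbOfFin rfl] at hx
    obtain ⟨a, b⟩ := p
    obtain ⟨ha, hb, hab⟩ := mem_pairs.1 (Finset.mem_coe.1 hp)
    obtain ⟨i, rfl⟩ := hg a ha
    obtain ⟨j, rfl⟩ := hg b hb
    exact ⟨(i, j), Finset.mem_filter.2 ⟨Finset.mem_univ _, g.lt_iff_lt.1 hab⟩, rfl⟩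

end TreeGraph

lemma EReal.coe_finset_sum {ι : Type*} (s : Finset ι) (f : ι → ℝ) :
    ((∑ i ∈ s, f i : ℝ) : EReal) = ∑ i ∈ s, (f i : EReal) :=
  map_sum (⟨⟨((↑) : ℝ → EReal), EReal.coe_zero⟩, EReal.coe_add⟩ : ℝ →+ EReal) f s

/-- Stability for two particles already excludes `V = -∞`. -/
lemma ne_bot_of_neg_sum_le_pairEnergy {P : Type*} {V : P → P → EReal} {B : P → ℝ}
    (hstab : ∀ (m : ℕ) (γ : Fin m → P), -(∑ i, (B (γ i) : EReal)) ≤ pairEnergy V m γ)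
    (x y : P) : V x y ≠ ⊥ := by
  have h := hstab 2 ![x, y]
  have hV : pairEnergy V 2 ![x, y] = V x y := by
    rw [pairEnergy, Finset.sum_eq_single (0, 1)]
    · rfl
    · rintro ⟨i, j⟩ hp hne
      have := (Finset.mem_filter.1 hp).2
      fin_cases i <;> fin_cases j <;> simp_all
    · simp
  rw [hV, ← EReal.coe_finset_sum, ← EReal.coe_neg] at h
  exact ne_bot_of_le_ne_bot (EReal.coe_ne_bot _) h

lemma neg_sum_le_sum_pairs_toReal {P α : Type*} [LinearOrder α] {V : P → P → EReal}
    {B : P → ℝ}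
    (hstab : ∀ (m : ℕ) (γ : Fin m → P), -(∑ i, (B (γ i) : EReal)) ≤ pairEnergy V m γ)
    (γ : α → P) (T : Finset α) (hT : ∀ p ∈ TreeGraph.pairs T, V (γ p.1) (γ p.2) ≠ ⊤) :
    -∑ i ∈ T, B (γ i) ≤ ∑ p ∈ TreeGraph.pairs T, (V (γ p.1) (γ p.2)).toReal := by
  set g := T.orderEmbOfFin rfl
  have h := hstab T.card fun i => γ (g i)
  have hV : pairEnergy V T.card (fun i => γ (g i)) =
      ∑ p ∈ TreeGraph.pairs T, V (γ p.1) (γ p.2) :=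
    TreeGraph.sum_pairs_orderEmbOfFin T fun p => V (γ p.1) (γ p.2)
  have hB : ∑ i, (B (γ (g i)) : EReal) = ∑ x ∈ T, (B (γ x) : EReal) := by
    conv_rhs => rw [← T.map_orderEmbOfFin_univ rfl, Finset.sum_map]
    rfl
  rw [hV, hB, ← Finset.sum_congr rfl fun p hp => EReal.coe_toReal (hT p hp)
      (ne_bot_of_neg_sum_le_pairEnergy hstab _ _),
    ← EReal.coe_finset_sum, ← EReal.coe_finset_sum, ← EReal.coe_neg] at h
  exact_mod_cast h

lemma graphFinset_eq_connectedGraphs (n : ℕ) :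
    graphFinset n = TreeGraph.connectedGraphs (Finset.univ : Finset (Fin n)) := by
  ext E
  rw [graphFinset, Finset.mem_filter, TreeGraph.connectedGraphs, Finset.mem_filter,
    Finset.mem_powerset]
  refine ⟨fun ⟨_, h, hc⟩ => ⟨fun p hp => by simpa using h p hp, fun A _ hA hA' => ?_⟩,
    fun ⟨h, hc⟩ => ⟨Finset.mem_univ _, fun p hp => (TreeGraph.mem_pairs.1 (h hp)).2.2,
      fun A hA hA' => ?_⟩⟩
  · obtain ⟨p, hp, h⟩ := hc A hA (by convert hA')
    exact ⟨p, hp, by unfold TreeGraph.Crosses; tauto⟩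
  · obtain ⟨p, hp, h⟩ := hc A (Finset.subset_univ A) hA (by convert hA')
    exact ⟨p, hp, by unfold TreeGraph.Crosses at h; tauto⟩

lemma treeFinset_eq_spanningTrees {n : ℕ} (hn : 1 ≤ n) :
    treeFinset n = TreeGraph.spanningTrees (Finset.univ : Finset (Fin n)) := by
  rw [treeFinset, graphFinset_eq_connectedGraphs, TreeGraph.spanningTrees, Finset.card_univ,
    Fintype.card_fin]
  exact Finset.filter_congr fun E _ => by omega

theorem stmt5_general {P : Type*}
    (V : P → P → EReal)
    (B : P → ℝ)
    (hstab : ∀ (m : ℕ) (γ : Fin m → P),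
      -(∑ i, (B (γ i) : EReal)) ≤ pairEnergy V m γ)
    (n : ℕ) (hn : 1 ≤ n) (γ : Fin n → P) :
    |ursell V n γ| ≤ Real.exp (∑ i, B (γ i)) *
      ∑ E ∈ treeFinset n, ∏ p ∈ E, Freal V (γ p.1) (γ p.2) := by
  rw [ursell, graphFinset_eq_connectedGraphs, treeFinset_eq_spanningTrees hn]
  exact TreeGraph.abs_graphSum_le_exp_mul_treeSum (hard := fun p => V (γ p.1) (γ p.2) = ⊤)
    (v := fun p => (V (γ p.1) (γ p.2)).toReal) (fun p h => by simp [eweight, h])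
    (fun p h => by simp [Freal, h]) (fun p h => by simp [eweight, TreeGraph.mayer, h])
    (fun p h => by simp [Freal, h]) (fun T _ hT => neg_sum_le_sum_pairs_toReal hstab γ T hT)
    ⟨⟨0, hn⟩, Finset.mem_univ _⟩

/-- the tree-graph bound
`|φᵀ(γ₁,…,γₙ)| ≤ e^{Σᵢ B(γᵢ)} Σ_{τ ∈ Tₙ} ∏_{{i,j}∈E_τ} F(γᵢ,γⱼ)`. -/
theorem stmt5 {P : Type*}
    (V : P → P → EReal) (hVsym : ∀ γ γ', V γ γ' = V γ' γ)
    (hVbot : ∀ γ γ', V γ γ' ≠ ⊥)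
    (B : P → ℝ) (hB : ∀ γ, 0 ≤ B γ)
    (hstab : ∀ (m : ℕ) (γ : Fin m → P),
      -(∑ i, (B (γ i) : EReal)) ≤ pairEnergy V m γ)
    (n : ℕ) (hn : 1 ≤ n) (γ : Fin n → P) :
    |ursell V n γ| ≤ Real.exp (∑ i, B (γ i)) *
      ∑ E ∈ treeFinset n, ∏ p ∈ E, Freal V (γ p.1) (γ p.2) :=
  stmt5_general V B hstab n hn γ
end
end
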